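/- arXiv:2112.00306 — 2 statements merged into one kernel-verified Lean document; each statement's English description precedes it below -/
import Mathlib

section
/- (Counting admissible quadruples) For every positive integer k that is not a perfect square and every constant c ∈ (0,1), there exist a constant c₄ > 0 and M₀ such that for all M ≥ M₀, the number of quadruples (p₁, p₂, q₁, q₂) ∈ ℤ⁴ with c·√M ≤ p₁, p₂, q₁, q₂ ≤ √M such that no prime d > 5 divides both p₁² − k·p₂² and q₁² − k·q₂², and no prime d > 5 divides both p₁ and p₂, is at least c₄·M². -/
set_option maxHeartbeats 2000000


-- telescoping sum bound
lemma aux_sum_inv_sq (N : ℕ) : ∑ d ∈ Finset.Icc 7 N, (1:ℝ)/(d:ℝ)^2 ≤ 1/6 := by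
  have key : ∀ N : ℕ, 6 ≤ N → ∑ d ∈ Finset.Icc 7 N, (1:ℝ)/(d:ℝ)^2 ≤ 1/6 - 1/(N:ℝ) := by
    intro N hN
    induction N, hN using Nat.le_induction with
    | base => simp
    | succ N hN ih =>
      rw [Finset.sum_Icc_succ_top (by omega)]
      have hN0 : (0:ℝ) < (N:ℝ) := by
        have : 0 < N := by omega
        exact_mod_cast this
      have h1 : (1:ℝ)/((N:ℝ)+1)^2 ≤ 1/(N:ℝ) - 1/((N:ℝ)+1) := by
        rw [div_sub_div _ _ (ne_of_gt hN0) (by positivity)]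
        rw [div_le_div_iff₀ (by positivity) (by positivity)]
        ring_nf
        nlinarith
      push_cast
      linarith
  rcases le_or_gt 7 N with h | h
  · have := key N (by omega)
    have : (0:ℝ) < N := by exact_mod_cast (by omega : 0 < N)
    have h2 := key N (by omega)
    have h3 : (0:ℝ) ≤ 1/(N:ℝ) := by positivity
    linarith
  · rw [Finset.Icc_eq_empty (by omega)]
    norm_num

-- residue class count
lemma aux_card_congr (a b : ℤ) (hab : a ≤ b) (d : ℕ) (hd : 0 < d) (s : Finset ℤ)
    (hs : ∀ x ∈ s, x ∈ Finset.Icc a b)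
    (hcong : ∀ x ∈ s, ∀ y ∈ s, (d:ℤ) ∣ x - y) :
    (s.card : ℤ) ≤ (b - a) / d + 1 := by
  classical
  have hd' : (0:ℤ) < (d:ℤ) := by exact_mod_cast hd
  have hmap : ∀ x ∈ s, (x - a) / (d:ℤ) ∈ Finset.Icc (0:ℤ) ((b - a)/(d:ℤ)) := by
    intro x hx
    have hx' := Finset.mem_Icc.mp (hs x hx)
    rw [Finset.mem_Icc]
    constructor
    · exact Int.ediv_nonneg (by linarith) hd'.le
    · exact Int.ediv_le_ediv hd' (by linarith)
  have hinj : Set.InjOn (fun x : ℤ => (x - a) / (d:ℤ)) s := by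
    intro x hx y hy hxy
    simp only at hxy
    have hdvd := hcong x hx y hy
    have hmod : (x - a) % (d:ℤ) = (y - a) % (d:ℤ) := by
      have : (x - a) ≡ (y - a) [ZMOD (d:ℤ)] := by
        have : x ≡ y [ZMOD (d:ℤ)] := Int.ModEq.symm (Int.modEq_iff_dvd.mpr hdvd)
        exact this.sub_right a
      exact this
    have e1 := Int.mul_ediv_add_emod (x - a) (d:ℤ)
    have e2 := Int.mul_ediv_add_emod (y - a) (d:ℤ)
    have : x - a = y - a := by
      rw [← e1, ← e2, hxy, hmod]
    linarith
  have hcard := Finset.card_le_card_of_injOn _ hmap hinj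
  have hq : (0:ℤ) ≤ (b - a)/(d:ℤ) := Int.ediv_nonneg (by linarith) hd'.le
  have : (Finset.Icc (0:ℤ) ((b-a)/(d:ℤ))).card = ((b-a)/(d:ℤ) + 1).toNat := by
    rw [Int.card_Icc]; congr 1; ring
  rw [this] at hcard
  have := Int.toNat_of_nonneg (by linarith : (0:ℤ) ≤ (b-a)/(d:ℤ) + 1)
  omega

-- square roots in ZMod d
lemma aux_sqrt_card (d : ℕ) [Fact (Nat.Prime d)] (a : ZMod d) :
    (Finset.univ.filter (fun x : ZMod d => x^2 = a)).card ≤ 2 := by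
  by_cases h : ∃ x : ZMod d, x^2 = a
  · obtain ⟨x₀, hx₀⟩ := h
    have hsub : Finset.univ.filter (fun x : ZMod d => x^2 = a) ⊆ {x₀, -x₀} := by
      intro y hy
      rw [Finset.mem_filter] at hy
      have h0 : (y - x₀) * (y + x₀) = 0 := by
        have : y^2 = x₀^2 := by rw [hy.2, hx₀]
        linear_combination this
      rcases mul_eq_zero.mp h0 with h | h
      · simp [sub_eq_zero.mp h]
      · have : y = -x₀ := by linear_combination h
        simp [this]
    calc _ ≤ ({x₀, -x₀} : Finset (ZMod d)).card := Finset.card_le_card hsub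
      _ ≤ 2 := Finset.card_insert_le _ _ |>.trans (by simp)
  · push_neg at h
    rw [Finset.filter_false_of_mem (fun x _ => h x)]
    simp

-- count of x in Icc with d ∣ x^2 - m
lemma aux_single_count (a b : ℤ) (hab : a ≤ b) (d : ℕ) (hd : d.Prime) (m : ℤ) :
    (((Finset.Icc a b).filter (fun x : ℤ => (d:ℤ) ∣ x^2 - m)).card : ℤ)
      ≤ 2 * ((b - a) / d + 1) := by
  classical
  haveI : Fact d.Prime := ⟨hd⟩
  set s := (Finset.Icc a b).filter (fun x : ℤ => (d:ℤ) ∣ x^2 - m) with hs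
  set R := Finset.univ.filter (fun r : ZMod d => r^2 = (m : ZMod d)) with hR
  have hmapR : ∀ x ∈ s, ((x : ZMod d)) ∈ R := by
    intro x hx
    rw [Finset.mem_filter] at hx
    rw [hR, Finset.mem_filter]
    refine ⟨Finset.mem_univ _, ?_⟩
    have : ((x^2 - m : ℤ) : ZMod d) = 0 := (ZMod.intCast_zmod_eq_zero_iff_dvd _ d).mpr hx.2
    push_cast at this
    linear_combination this
  have hcard := Finset.card_eq_sum_card_fiberwise hmapR
  have hfiber : ∀ r ∈ R, ((s.filter (fun x : ℤ => ((x : ZMod d)) = r)).card : ℤ)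
      ≤ (b - a) / d + 1 := by
    intro r _
    apply aux_card_congr a b hab d hd.pos
    · intro x hx
      rw [Finset.mem_filter] at hx
      exact (Finset.mem_filter.mp hx.1).1
    · intro x hx y hy
      rw [Finset.mem_filter] at hx hy
      have : ((x : ZMod d)) = ((y : ZMod d)) := by rw [hx.2, hy.2]
      have := (ZMod.intCast_eq_intCast_iff _ _ _).mp this
      exact Int.ModEq.dvd this.symm
  have hR2 : R.card ≤ 2 := aux_sqrt_card d (m : ZMod d)
  have hq : (0:ℤ) ≤ (b - a) / d + 1 := by
    have : (0:ℤ) ≤ (b - a) / d := Int.ediv_nonneg (by linarith) (by positivity)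
    linarith
  calc (s.card : ℤ) = ∑ r ∈ R, ((s.filter (fun x : ℤ => ((x : ZMod d)) = r)).card : ℤ) := by
        rw [hcard]; push_cast; ring
    _ ≤ ∑ r ∈ R, ((b - a) / d + 1) := Finset.sum_le_sum hfiber
    _ = R.card * ((b - a) / d + 1) := by rw [Finset.sum_const, nsmul_eq_mul]
    _ ≤ 2 * ((b - a) / d + 1) := by
        have : (R.card : ℤ) ≤ 2 := by exact_mod_cast hR2
        nlinarith

-- pair count: number of (x,y) in Icc² with d ∣ x² - k y²
lemma aux_pair_count (k : ℕ) (a b : ℤ) (hab : a ≤ b) (d : ℕ) (hd : d.Prime) :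
    ((((Finset.Icc a b) ×ˢ (Finset.Icc a b)).filter
        (fun p : ℤ × ℤ => (d:ℤ) ∣ p.1^2 - (k:ℤ) * p.2^2)).card : ℤ)
      ≤ (Finset.Icc a b).card * (2 * ((b - a) / d + 1)) := by
  classical
  set I := Finset.Icc a b with hI
  set s := (I ×ˢ I).filter (fun p : ℤ × ℤ => (d:ℤ) ∣ p.1^2 - (k:ℤ) * p.2^2) with hs
  have hmap : ∀ p ∈ s, p.2 ∈ I := by
    intro p hp
    exact (Finset.mem_product.mp (Finset.mem_filter.mp hp).1).2
  have hcard := Finset.card_eq_sum_card_fiberwise hmap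
  have hfiber : ∀ y ∈ I, ((s.filter (fun p => p.2 = y)).card : ℤ)
      ≤ 2 * ((b - a) / d + 1) := by
    intro y _
    have hinj : Set.InjOn Prod.fst ((s.filter (fun p => p.2 = y) : Finset (ℤ × ℤ)) : Set (ℤ × ℤ)) := by
      intro p hp q hq hpq
      simp only [Finset.coe_filter, Set.mem_setOf_eq] at hp hq
      exact Prod.ext hpq (hp.2.trans hq.2.symm)
    have hmapf : ∀ p ∈ s.filter (fun p => p.2 = y),
        p.1 ∈ I.filter (fun x : ℤ => (d:ℤ) ∣ x^2 - ((k:ℤ) * y^2)) := by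
      intro p hp
      rw [Finset.mem_filter] at hp
      obtain ⟨hp1, hp2⟩ := hp
      rw [Finset.mem_filter] at hp1 ⊢
      refine ⟨(Finset.mem_product.mp hp1.1).1, ?_⟩
      have := hp1.2
      rw [hp2] at this
      exact this
    have := Finset.card_le_card_of_injOn _ hmapf hinj
    calc ((s.filter (fun p => p.2 = y)).card : ℤ)
        ≤ ((I.filter (fun x : ℤ => (d:ℤ) ∣ x^2 - ((k:ℤ) * y^2))).card : ℤ) := by
          exact_mod_cast this
      _ ≤ 2 * ((b - a) / d + 1) := aux_single_count a b hab d hd ((k:ℤ) * y^2)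
  calc (s.card : ℤ) = ∑ y ∈ I, ((s.filter (fun p => p.2 = y)).card : ℤ) := by
        rw [hcard]; push_cast; ring
    _ ≤ ∑ y ∈ I, (2 * ((b - a) / d + 1)) := Finset.sum_le_sum hfiber
    _ = I.card * (2 * ((b - a) / d + 1)) := by rw [Finset.sum_const, nsmul_eq_mul]

-- nonvanishing
lemma aux_ne_zero (k : ℕ) (hks : ¬ IsSquare k) (p q : ℤ) (hq : q ≠ 0) :
    p^2 - (k:ℤ)*q^2 ≠ 0 := by
  intro h
  have hkq : (k:ℤ) * q^2 = p^2 := by linarith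
  have hdvd : q ∣ p := by
    have h2 : q^2 ∣ p^2 := ⟨k, by linarith⟩
    exact (Int.pow_dvd_pow_iff (by norm_num : 2 ≠ 0)).mp h2
  obtain ⟨m, hm⟩ := hdvd
  have hq2 : q^2 ≠ 0 := pow_ne_zero _ hq
  have : (k:ℤ) = m^2 := by
    have : (k:ℤ) * q^2 = m^2 * q^2 := by rw [hkq, hm]; ring
    exact mul_right_cancel₀ hq2 this
  apply hks
  refine ⟨m.natAbs, ?_⟩
  have : (k:ℤ) = (m.natAbs : ℤ) * (m.natAbs : ℤ) := by
    rw [this]; rw [← Int.natAbs_sq m]; push_cast; ring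
  exact_mod_cast this

-- at most 3 prime factors above T
lemma aux_bigfactors (m T : ℕ) (hm : m ≠ 0) (hmT : m < T^4) :
    ((m.primeFactors).filter (fun d => T < d)).card ≤ 3 := by
  by_contra hcon
  push_neg at hcon
  set S := (m.primeFactors).filter (fun d => T < d) with hS
  have hT1 : 1 ≤ T := by
    by_contra hT
    push_neg at hT
    interval_cases T <;> simp_all <;> omega
  have hpow : T ^ S.card ≤ ∏ p ∈ S, p := by
    apply Finset.pow_card_le_prod
    intro p hp
    exact ((Finset.mem_filter.mp hp).2).le
  have hprod : (∏ p ∈ S, p) ∣ m := by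
    refine dvd_trans ?_ (Nat.prod_primeFactors_dvd m)
    exact Finset.prod_dvd_prod_of_subset _ _ _ (Finset.filter_subset _ _)
  have hle : (∏ p ∈ S, p) ≤ m := Nat.le_of_dvd (Nat.pos_of_ne_zero hm) hprod
  have h4 : T^4 ≤ T^S.card := Nat.pow_le_pow_right hT1 (by omega)
  omega

-- the split bound in ℝ
lemma aux_split_bound {L D X : ℝ} (hL : 0 ≤ L) (hD : 0 < D) (hX : 0 ≤ X)
    (h : X ≤ L/D + 1) : X^2 ≤ (625/576) * (L^2/D^2) + 625 := by
  have hLD : 0 ≤ L / D := div_nonneg hL hD.le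
  rcases le_total (L/D) 24 with h24 | h24
  · have h25 : X ≤ 25 := by linarith
    have hsq : (0:ℝ) ≤ L^2/D^2 := by positivity
    nlinarith [mul_nonneg hX (by linarith : (0:ℝ) ≤ 25 - X)]
  · have hX25 : X ≤ (25/24) * (L/D) := by nlinarith
    have : X^2 ≤ (625/576) * (L/D)^2 := by nlinarith
    have : (L/D)^2 = L^2/D^2 := by rw [div_pow]
    nlinarith [sq_nonneg (L/D)]

/-- The box of quadruples. -/
noncomputable def qBox (a b : ℤ) : Finset (ℤ × ℤ × ℤ × ℤ) :=
  Finset.Icc a b ×ˢ (Finset.Icc a b ×ˢ (Finset.Icc a b ×ˢ Finset.Icc a b))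

lemma qBox_card (a b : ℤ) : (qBox a b).card = (Finset.Icc a b).card ^ 4 := by
  rw [qBox, Finset.card_product, Finset.card_product, Finset.card_product]; ring

lemma qBox_mem {a b : ℤ} {x : ℤ × ℤ × ℤ × ℤ} (hx : x ∈ qBox a b) :
    x.1 ∈ Finset.Icc a b ∧ x.2.1 ∈ Finset.Icc a b ∧
    x.2.2.1 ∈ Finset.Icc a b ∧ x.2.2.2 ∈ Finset.Icc a b := by
  rw [qBox] at hx
  simp only [Finset.mem_product] at hx
  tauto

/-- Splitting injection bound. -/
lemma aux_key (a b : ℤ) (st tt : Finset (ℤ×ℤ)) (Q : (ℤ×ℤ×ℤ×ℤ) → Prop) [DecidablePred Q]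
    (hQ : ∀ x ∈ (qBox a b).filter Q, ((x.1, x.2.1) ∈ st ∧ (x.2.2.1, x.2.2.2) ∈ tt)) :
    ((qBox a b).filter Q).card ≤ st.card * tt.card := by
  have hinj := Finset.card_le_card_of_injOn
    (f := fun x : ℤ×ℤ×ℤ×ℤ => ((x.1, x.2.1),(x.2.2.1, x.2.2.2)))
    (s := (qBox a b).filter Q) (t := st ×ˢ tt)
    (fun x hx => Finset.mem_product.mpr (hQ x hx))
    (by
      intro x hx y hy h
      simp only [Prod.mk.injEq] at h
      obtain ⟨⟨e1,e2⟩,e3,e4⟩ := h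
      exact Prod.ext e1 (Prod.ext e2 (Prod.ext e3 e4)))
  simpa [Finset.card_product] using hinj

lemma aux_divR (len : ℤ) (hlen : 0 ≤ len) (d : ℕ) (hd : 0 < d) :
    ((len / (d:ℤ) : ℤ) : ℝ) ≤ (len:ℝ)/(d:ℝ) := by
  have hd0 : (0:ℝ) < (d:ℝ) := by exact_mod_cast hd
  rw [le_div_iff₀ hd0]
  have h1 : (0:ℤ) ≤ len % (d:ℤ) := Int.emod_nonneg _ (by exact_mod_cast hd.ne')
  have h2 := Int.mul_ediv_add_emod len (d:ℤ)
  have h3 : (len / (d:ℤ)) * (d:ℤ) ≤ len := by rw [mul_comm]; linarith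
  exact_mod_cast h3

/-- Real-valued bound for the pair count. -/
lemma aux_pair_countR (k : ℕ) (a b : ℤ) (hab : a ≤ b) (d : ℕ) (hd : d.Prime) :
    ((((Finset.Icc a b) ×ˢ (Finset.Icc a b)).filter
        (fun p : ℤ × ℤ => (d:ℤ) ∣ p.1^2 - (k:ℤ) * p.2^2)).card : ℝ)
      ≤ ((Finset.Icc a b).card : ℝ) * (2 * (((b - a : ℤ):ℝ)/(d:ℝ) + 1)) := by
  have h1 := aux_pair_count k a b hab d hd
  have h2 : ((((Finset.Icc a b) ×ˢ (Finset.Icc a b)).filter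
        (fun p : ℤ × ℤ => (d:ℤ) ∣ p.1^2 - (k:ℤ) * p.2^2)).card : ℝ)
      ≤ ((Finset.Icc a b).card : ℝ) * (2 * ((((b - a)/(d:ℤ) : ℤ):ℝ) + 1)) := by
    exact_mod_cast h1
  have h3 := aux_divR (b - a) (by omega) d hd.pos
  nlinarith [Nat.cast_nonneg (α := ℝ) (Finset.Icc a b).card]

/-- Squared real bound for the pair count. -/
lemma aux_pair_sq (k : ℕ) (a b : ℤ) (hab : a ≤ b) (d : ℕ) (hd : d.Prime) :
    ((((Finset.Icc a b) ×ˢ (Finset.Icc a b)).filter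
        (fun p : ℤ × ℤ => (d:ℤ) ∣ p.1^2 - (k:ℤ) * p.2^2)).card : ℝ)^2
      ≤ (625/144)*((Finset.Icc a b).card:ℝ)^4 * (1/(d:ℝ)^2)
        + 2500*((Finset.Icc a b).card:ℝ)^2 := by
  set n : ℕ := (Finset.Icc a b).card with hndef
  set len : ℤ := b - a with hlendef
  have hlen0 : (0:ℤ) ≤ len := by omega
  have hlenR0 : (0:ℝ) ≤ (len:ℝ) := by exact_mod_cast hlen0
  have hnZ : (n:ℤ) = len + 1 := by rw [hndef, Int.card_Icc]; omega
  have hnR : (n:ℝ) = (len:ℝ) + 1 := by exact_mod_cast hnZ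
  have hd0 : (0:ℝ) < (d:ℝ) := by exact_mod_cast hd.pos
  set Fc : ℝ := ((((Finset.Icc a b) ×ˢ (Finset.Icc a b)).filter
        (fun p : ℤ × ℤ => (d:ℤ) ∣ p.1^2 - (k:ℤ) * p.2^2)).card : ℝ) with hFcdef
  have hF0 : (0:ℝ) ≤ Fc := Nat.cast_nonneg _
  set X : ℝ := (len:ℝ)/(d:ℝ) + 1 with hXdef
  have hX0 : 0 ≤ X := by positivity
  have h1 : Fc ≤ (n:ℝ) * (2 * X) := aux_pair_countR k a b hab d hd
  have hXsq : X^2 ≤ (625/576) * ((len:ℝ)^2/(d:ℝ)^2) + 625 :=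
    aux_split_bound hlenR0 hd0 hX0 (le_refl _)
  have h2 : Fc^2 ≤ 4*(n:ℝ)^2 * X^2 := by
    have hmul := mul_le_mul h1 h1 hF0 (mul_nonneg (Nat.cast_nonneg n) (by linarith))
    calc Fc^2 = Fc * Fc := by ring
      _ ≤ ((n:ℝ) * (2*X)) * ((n:ℝ) * (2*X)) := hmul
      _ = 4*(n:ℝ)^2 * X^2 := by ring
  have hlensq : (len:ℝ)^2/(d:ℝ)^2 ≤ (n:ℝ)^2 * (1/(d:ℝ)^2) := by
    rw [div_eq_mul_one_div]
    have e1 : (len:ℝ)^2 ≤ (n:ℝ)^2 := by nlinarith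
    have e2 : (0:ℝ) ≤ 1/(d:ℝ)^2 := by positivity
    exact mul_le_mul_of_nonneg_right e1 e2
  have h4 : 4*(n:ℝ)^2 * X^2 ≤ 4*(n:ℝ)^2 * ((625/576) * ((len:ℝ)^2/(d:ℝ)^2) + 625) := by
    have e3 : (0:ℝ) ≤ 4*(n:ℝ)^2 := by positivity
    exact mul_le_mul_of_nonneg_left hXsq e3
  have h5 : 4*(n:ℝ)^2 * ((625/576) * ((len:ℝ)^2/(d:ℝ)^2) + 625)
      ≤ (625/144)*(n:ℝ)^4 * (1/(d:ℝ)^2) + 2500*(n:ℝ)^2 := by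
    have h6 := mul_le_mul_of_nonneg_left hlensq
      (show (0:ℝ) ≤ (625/144)*(n:ℝ)^2 by positivity)
    calc 4*(n:ℝ)^2 * ((625/576)*((len:ℝ)^2/(d:ℝ)^2) + 625)
        = (625/144)*(n:ℝ)^2 * ((len:ℝ)^2/(d:ℝ)^2) + 2500*(n:ℝ)^2 := by ring
      _ ≤ (625/144)*(n:ℝ)^2 * ((n:ℝ)^2 * (1/(d:ℝ)^2)) + 2500*(n:ℝ)^2 := by linarith
      _ = (625/144)*(n:ℝ)^4 * (1/(d:ℝ)^2) + 2500*(n:ℝ)^2 := by ring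
  exact le_trans h2 (le_trans h4 h5)

/-- Real bound for the single-residue count. -/
lemma aux_gcountR (a b : ℤ) (hab : a ≤ b) (d : ℕ) (hd : d.Prime) :
    (((Finset.Icc a b).filter (fun x : ℤ => (d:ℤ) ∣ x)).card : ℝ)
      ≤ ((b - a : ℤ):ℝ)/(d:ℝ) + 1 := by
  have h1 : ((((Finset.Icc a b).filter (fun x : ℤ => (d:ℤ) ∣ x)).card) : ℤ)
      ≤ (b - a) / d + 1 := by
    apply aux_card_congr a b hab d hd.pos
    · intro x hx
      exact Finset.mem_of_mem_filter _ hx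
    · intro x hx y hy
      rw [Finset.mem_filter] at hx hy
      exact dvd_sub hx.2 hy.2
  have h2 : ((((Finset.Icc a b).filter (fun x : ℤ => (d:ℤ) ∣ x)).card) : ℝ)
      ≤ (((b - a) / (d:ℤ) : ℤ):ℝ) + 1 := by exact_mod_cast h1
  have h3 := aux_divR (b - a) (by omega) d hd.pos
  linarith

lemma aux_g_sq (a b : ℤ) (hab : a ≤ b) (d : ℕ) (hd : d.Prime) :
    (((Finset.Icc a b).filter (fun x : ℤ => (d:ℤ) ∣ x)).card : ℝ)^2
      ≤ (625/576)*((Finset.Icc a b).card:ℝ)^2 * (1/(d:ℝ)^2) + 625 := by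
  set n : ℕ := (Finset.Icc a b).card with hndef
  set len : ℤ := b - a with hlendef
  have hlen0 : (0:ℤ) ≤ len := by omega
  have hlenR0 : (0:ℝ) ≤ (len:ℝ) := by exact_mod_cast hlen0
  have hnZ : (n:ℤ) = len + 1 := by rw [hndef, Int.card_Icc]; omega
  have hnR : (n:ℝ) = (len:ℝ) + 1 := by exact_mod_cast hnZ
  have hd0 : (0:ℝ) < (d:ℝ) := by exact_mod_cast hd.pos
  set Gc : ℝ := (((Finset.Icc a b).filter (fun x : ℤ => (d:ℤ) ∣ x)).card : ℝ) with hGcdef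
  have hG0 : (0:ℝ) ≤ Gc := Nat.cast_nonneg _
  set X : ℝ := (len:ℝ)/(d:ℝ) + 1 with hXdef
  have hX0 : 0 ≤ X := by positivity
  have h1 : Gc ≤ X := aux_gcountR a b hab d hd
  have hXsq : X^2 ≤ (625/576) * ((len:ℝ)^2/(d:ℝ)^2) + 625 :=
    aux_split_bound hlenR0 hd0 hX0 (le_refl _)
  have h2 : Gc^2 ≤ X^2 := by nlinarith
  have hlensq : (len:ℝ)^2/(d:ℝ)^2 ≤ (n:ℝ)^2 * (1/(d:ℝ)^2) := by
    rw [div_eq_mul_one_div]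
    have e1 : (len:ℝ)^2 ≤ (n:ℝ)^2 := by nlinarith
    have e2 : (0:ℝ) ≤ 1/(d:ℝ)^2 := by positivity
    exact mul_le_mul_of_nonneg_right e1 e2
  have h6 := mul_le_mul_of_nonneg_left hlensq (show (0:ℝ) ≤ (625/576:ℝ) by norm_num)
  have h7 : X^2 ≤ (625/576)*(n:ℝ)^2 * (1/(d:ℝ)^2) + 625 := by
    calc X^2 ≤ (625/576) * ((len:ℝ)^2/(d:ℝ)^2) + 625 := hXsq
      _ ≤ (625/576) * ((n:ℝ)^2 * (1/(d:ℝ)^2)) + 625 := by linarith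
      _ = (625/576)*(n:ℝ)^2 * (1/(d:ℝ)^2) + 625 := by ring
  exact le_trans h2 h7

open Classical in
/-- Bound on the union over small primes for the first condition. -/
lemma aux_U1 (k : ℕ) (a b : ℤ) (hab : a ≤ b) (T : ℕ) (hT : (T:ℤ) ≤ b - a) :
    ((((Finset.Icc 7 T).filter Nat.Prime).biUnion (fun d =>
        (qBox a b).filter (fun x : ℤ×ℤ×ℤ×ℤ =>
          (d:ℤ) ∣ (x.1^2 - (k:ℤ)*x.2.1^2) ∧
          (d:ℤ) ∣ (x.2.2.1^2 - (k:ℤ)*x.2.2.2^2)))).card : ℝ)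
      ≤ 625/864 * ((Finset.Icc a b).card:ℝ)^4
        + 2500 * ((Finset.Icc a b).card:ℝ)^3 := by
  classical
  set n : ℕ := (Finset.Icc a b).card with hndef
  have hnZ : (n:ℤ) = (b - a) + 1 := by rw [hndef, Int.card_Icc]; omega
  set D₁ : Finset ℕ := (Finset.Icc 7 T).filter Nat.Prime with hD₁def
  have hstep : ∀ d ∈ D₁,
      (((qBox a b).filter (fun x : ℤ×ℤ×ℤ×ℤ =>
          (d:ℤ) ∣ (x.1^2 - (k:ℤ)*x.2.1^2) ∧
          (d:ℤ) ∣ (x.2.2.1^2 - (k:ℤ)*x.2.2.2^2))).card : ℝ)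
        ≤ (625/144)*(n:ℝ)^4 * (1/(d:ℝ)^2) + 2500*(n:ℝ)^2 := by
    intro d hd
    rw [hD₁def, Finset.mem_filter] at hd
    have hdp : d.Prime := hd.2
    set Fd := ((Finset.Icc a b ×ˢ Finset.Icc a b).filter
        (fun p : ℤ × ℤ => (d:ℤ) ∣ p.1^2 - (k:ℤ) * p.2^2)) with hFddef
    have hkey : ((qBox a b).filter (fun x : ℤ×ℤ×ℤ×ℤ =>
          (d:ℤ) ∣ (x.1^2 - (k:ℤ)*x.2.1^2) ∧
          (d:ℤ) ∣ (x.2.2.1^2 - (k:ℤ)*x.2.2.2^2))).card ≤ Fd.card * Fd.card := by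
      apply aux_key
      intro x hx
      rw [Finset.mem_filter] at hx
      obtain ⟨hxB, hx1, hx2⟩ := hx
      have hm := qBox_mem hxB
      constructor
      · rw [hFddef, Finset.mem_filter, Finset.mem_product]
        exact ⟨⟨hm.1, hm.2.1⟩, hx1⟩
      · rw [hFddef, Finset.mem_filter, Finset.mem_product]
        exact ⟨⟨hm.2.2.1, hm.2.2.2⟩, hx2⟩
    have hsq : ((Fd.card : ℝ))^2 ≤ (625/144)*(n:ℝ)^4 * (1/(d:ℝ)^2) + 2500*(n:ℝ)^2 := by
      rw [hFddef]
      exact aux_pair_sq k a b hab d hdp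
    calc (((qBox a b).filter (fun x : ℤ×ℤ×ℤ×ℤ =>
          (d:ℤ) ∣ (x.1^2 - (k:ℤ)*x.2.1^2) ∧
          (d:ℤ) ∣ (x.2.2.1^2 - (k:ℤ)*x.2.2.2^2))).card : ℝ)
        ≤ (Fd.card : ℝ) * (Fd.card : ℝ) := by exact_mod_cast hkey
      _ = ((Fd.card : ℝ))^2 := by ring
      _ ≤ _ := hsq
  have hbi : (((D₁.biUnion (fun d =>
      (qBox a b).filter (fun x : ℤ×ℤ×ℤ×ℤ =>
          (d:ℤ) ∣ (x.1^2 - (k:ℤ)*x.2.1^2) ∧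
          (d:ℤ) ∣ (x.2.2.1^2 - (k:ℤ)*x.2.2.2^2)))).card : ℕ) : ℝ)
      ≤ ∑ d ∈ D₁, ((625/144)*(n:ℝ)^4 * (1/(d:ℝ)^2) + 2500*(n:ℝ)^2) := by
    have h1 := Finset.card_biUnion_le (s := D₁) (t := fun d =>
      (qBox a b).filter (fun x : ℤ×ℤ×ℤ×ℤ =>
          (d:ℤ) ∣ (x.1^2 - (k:ℤ)*x.2.1^2) ∧
          (d:ℤ) ∣ (x.2.2.1^2 - (k:ℤ)*x.2.2.2^2)))
    have h2 : ((∑ d ∈ D₁, ((qBox a b).filter (fun x : ℤ×ℤ×ℤ×ℤ =>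
          (d:ℤ) ∣ (x.1^2 - (k:ℤ)*x.2.1^2) ∧
          (d:ℤ) ∣ (x.2.2.1^2 - (k:ℤ)*x.2.2.2^2))).card : ℕ) : ℝ)
        = ∑ d ∈ D₁, (((qBox a b).filter (fun x : ℤ×ℤ×ℤ×ℤ =>
          (d:ℤ) ∣ (x.1^2 - (k:ℤ)*x.2.1^2) ∧
          (d:ℤ) ∣ (x.2.2.1^2 - (k:ℤ)*x.2.2.2^2))).card : ℝ) := by push_cast; rfl
    calc _ ≤ ((∑ d ∈ D₁, ((qBox a b).filter (fun x : ℤ×ℤ×ℤ×ℤ =>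
          (d:ℤ) ∣ (x.1^2 - (k:ℤ)*x.2.1^2) ∧
          (d:ℤ) ∣ (x.2.2.1^2 - (k:ℤ)*x.2.2.2^2))).card : ℕ) : ℝ) := by exact_mod_cast h1
      _ = _ := h2
      _ ≤ _ := Finset.sum_le_sum hstep
  have hsum1 : ∑ d ∈ D₁, (1:ℝ)/(d:ℝ)^2 ≤ 1/6 := by
    calc ∑ d ∈ D₁, (1:ℝ)/(d:ℝ)^2 ≤ ∑ d ∈ Finset.Icc 7 T, (1:ℝ)/(d:ℝ)^2 := by
          apply Finset.sum_le_sum_of_subset_of_nonneg (Finset.filter_subset _ _)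
          intro i _ _
          positivity
      _ ≤ 1/6 := aux_sum_inv_sq T
  have hDcard : ((D₁.card : ℕ) : ℝ) ≤ (n:ℝ) := by
    have h1 : D₁.card ≤ (Finset.Icc 7 T).card := Finset.card_filter_le _ _
    have h2 : (Finset.Icc 7 T).card ≤ T := by
      rw [Nat.card_Icc]; omega
    have h3 : (T:ℝ) ≤ (n:ℝ) := by
      have : (T:ℤ) ≤ (n:ℤ) := by omega
      exact_mod_cast this
    have h4 : ((D₁.card : ℕ) : ℝ) ≤ (T:ℝ) := by exact_mod_cast le_trans h1 h2
    linarith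
  have hn0 : (0:ℝ) ≤ (n:ℝ) := Nat.cast_nonneg _
  have hexp : ∑ d ∈ D₁, ((625/144)*(n:ℝ)^4 * (1/(d:ℝ)^2) + 2500*(n:ℝ)^2)
      = (625/144)*(n:ℝ)^4 * (∑ d ∈ D₁, (1:ℝ)/(d:ℝ)^2) + 2500*(n:ℝ)^2 * D₁.card := by
    rw [Finset.sum_add_distrib, ← Finset.mul_sum, Finset.sum_const, nsmul_eq_mul]
    ring
  rw [hexp] at hbi
  have e1 : (625/144)*(n:ℝ)^4 * (∑ d ∈ D₁, (1:ℝ)/(d:ℝ)^2) ≤ (625/144)*(n:ℝ)^4 * (1/6) := by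
    apply mul_le_mul_of_nonneg_left hsum1 (by positivity)
  have e2 : 2500*(n:ℝ)^2 * D₁.card ≤ 2500*(n:ℝ)^2 * (n:ℝ) := by
    apply mul_le_mul_of_nonneg_left hDcard (by positivity)
  calc _ ≤ (625/144)*(n:ℝ)^4 * (∑ d ∈ D₁, (1:ℝ)/(d:ℝ)^2) + 2500*(n:ℝ)^2 * D₁.card := hbi
    _ ≤ (625/144)*(n:ℝ)^4 * (1/6) + 2500*(n:ℝ)^2 * (n:ℝ) := by linarith
    _ = 625/864 * (n:ℝ)^4 + 2500 * (n:ℝ)^3 := by ring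

open Classical in
/-- Bound on the union over small primes for the second condition. -/
lemma aux_U2 (a b : ℤ) (hab : a ≤ b) (b' : ℕ) :
    ((((Finset.Icc 7 b').filter Nat.Prime).biUnion (fun d =>
        (qBox a b).filter (fun x : ℤ×ℤ×ℤ×ℤ =>
          (d:ℤ) ∣ x.1 ∧ (d:ℤ) ∣ x.2.1))).card : ℝ)
      ≤ 625/3456 * ((Finset.Icc a b).card:ℝ)^4
        + 625 * ((Finset.Icc a b).card:ℝ)^2 * (b' : ℝ) := by
  classical
  set n : ℕ := (Finset.Icc a b).card with hndef
  set D₂ : Finset ℕ := (Finset.Icc 7 b').filter Nat.Prime with hD₂def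
  have hstep : ∀ d ∈ D₂,
      (((qBox a b).filter (fun x : ℤ×ℤ×ℤ×ℤ =>
          (d:ℤ) ∣ x.1 ∧ (d:ℤ) ∣ x.2.1)).card : ℝ)
        ≤ (625/576)*(n:ℝ)^4 * (1/(d:ℝ)^2) + 625*(n:ℝ)^2 := by
    intro d hd
    rw [hD₂def, Finset.mem_filter] at hd
    have hdp : d.Prime := hd.2
    set Gd := ((Finset.Icc a b).filter (fun x : ℤ => (d:ℤ) ∣ x)) with hGddef
    have hkey : ((qBox a b).filter (fun x : ℤ×ℤ×ℤ×ℤ =>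
          (d:ℤ) ∣ x.1 ∧ (d:ℤ) ∣ x.2.1)).card
        ≤ (Gd ×ˢ Gd).card * ((Finset.Icc a b) ×ˢ (Finset.Icc a b)).card := by
      apply aux_key
      intro x hx
      rw [Finset.mem_filter] at hx
      obtain ⟨hxB, hx1, hx2⟩ := hx
      have hm := qBox_mem hxB
      constructor
      · rw [Finset.mem_product]
        exact ⟨Finset.mem_filter.mpr ⟨hm.1, hx1⟩, Finset.mem_filter.mpr ⟨hm.2.1, hx2⟩⟩
      · rw [Finset.mem_product]
        exact ⟨hm.2.2.1, hm.2.2.2⟩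
    rw [Finset.card_product, Finset.card_product] at hkey
    have hsq : ((Gd.card : ℝ))^2 ≤ (625/576)*(n:ℝ)^2 * (1/(d:ℝ)^2) + 625 := by
      rw [hGddef]
      exact aux_g_sq a b hab d hdp
    have hR : (((qBox a b).filter (fun x : ℤ×ℤ×ℤ×ℤ =>
          (d:ℤ) ∣ x.1 ∧ (d:ℤ) ∣ x.2.1)).card : ℝ)
        ≤ ((Gd.card:ℝ) * (Gd.card:ℝ)) * ((n:ℝ) * (n:ℝ)) := by exact_mod_cast hkey
    have hn0 : (0:ℝ) ≤ (n:ℝ) := Nat.cast_nonneg _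
    calc (((qBox a b).filter (fun x : ℤ×ℤ×ℤ×ℤ =>
          (d:ℤ) ∣ x.1 ∧ (d:ℤ) ∣ x.2.1)).card : ℝ)
        ≤ ((Gd.card:ℝ))^2 * (n:ℝ)^2 := by nlinarith [hR]
      _ ≤ ((625/576)*(n:ℝ)^2 * (1/(d:ℝ)^2) + 625) * (n:ℝ)^2 := by
          apply mul_le_mul_of_nonneg_right hsq (by positivity)
      _ = (625/576)*(n:ℝ)^4 * (1/(d:ℝ)^2) + 625*(n:ℝ)^2 := by ring
  have hbi : (((D₂.biUnion (fun d =>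
      (qBox a b).filter (fun x : ℤ×ℤ×ℤ×ℤ =>
          (d:ℤ) ∣ x.1 ∧ (d:ℤ) ∣ x.2.1))).card : ℕ) : ℝ)
      ≤ ∑ d ∈ D₂, ((625/576)*(n:ℝ)^4 * (1/(d:ℝ)^2) + 625*(n:ℝ)^2) := by
    have h1 := Finset.card_biUnion_le (s := D₂) (t := fun d =>
      (qBox a b).filter (fun x : ℤ×ℤ×ℤ×ℤ =>
          (d:ℤ) ∣ x.1 ∧ (d:ℤ) ∣ x.2.1))
    calc _ ≤ ((∑ d ∈ D₂, ((qBox a b).filter (fun x : ℤ×ℤ×ℤ×ℤ =>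
          (d:ℤ) ∣ x.1 ∧ (d:ℤ) ∣ x.2.1)).card : ℕ) : ℝ) := by exact_mod_cast h1
      _ = ∑ d ∈ D₂, (((qBox a b).filter (fun x : ℤ×ℤ×ℤ×ℤ =>
          (d:ℤ) ∣ x.1 ∧ (d:ℤ) ∣ x.2.1)).card : ℝ) := by push_cast; rfl
      _ ≤ _ := Finset.sum_le_sum hstep
  have hsum1 : ∑ d ∈ D₂, (1:ℝ)/(d:ℝ)^2 ≤ 1/6 := by
    calc ∑ d ∈ D₂, (1:ℝ)/(d:ℝ)^2 ≤ ∑ d ∈ Finset.Icc 7 b', (1:ℝ)/(d:ℝ)^2 := by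
          apply Finset.sum_le_sum_of_subset_of_nonneg (Finset.filter_subset _ _)
          intro i _ _
          positivity
      _ ≤ 1/6 := aux_sum_inv_sq b'
  have hDcard : ((D₂.card : ℕ) : ℝ) ≤ (b':ℝ) := by
    have h1 : D₂.card ≤ (Finset.Icc 7 b').card := Finset.card_filter_le _ _
    have h2 : (Finset.Icc 7 b').card ≤ b' := by
      rw [Nat.card_Icc]; omega
    exact_mod_cast le_trans h1 h2
  have hexp : ∑ d ∈ D₂, ((625/576)*(n:ℝ)^4 * (1/(d:ℝ)^2) + 625*(n:ℝ)^2)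
      = (625/576)*(n:ℝ)^4 * (∑ d ∈ D₂, (1:ℝ)/(d:ℝ)^2) + 625*(n:ℝ)^2 * D₂.card := by
    rw [Finset.sum_add_distrib, ← Finset.mul_sum, Finset.sum_const, nsmul_eq_mul]
    ring
  rw [hexp] at hbi
  have e1 : (625/576)*(n:ℝ)^4 * (∑ d ∈ D₂, (1:ℝ)/(d:ℝ)^2) ≤ (625/576)*(n:ℝ)^4 * (1/6) := by
    apply mul_le_mul_of_nonneg_left hsum1 (by positivity)
  have e2 : 625*(n:ℝ)^2 * D₂.card ≤ 625*(n:ℝ)^2 * (b':ℝ) := by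
    apply mul_le_mul_of_nonneg_left hDcard (by positivity)
  calc _ ≤ (625/576)*(n:ℝ)^4 * (∑ d ∈ D₂, (1:ℝ)/(d:ℝ)^2) + 625*(n:ℝ)^2 * D₂.card := hbi
    _ ≤ (625/576)*(n:ℝ)^4 * (1/6) + 625*(n:ℝ)^2 * (b':ℝ) := by linarith
    _ = 625/3456 * (n:ℝ)^4 + 625 * (n:ℝ)^2 * (b':ℝ) := by ring

open Classical in
/-- Bound for the contribution of large primes. -/
lemma aux_U3 (k : ℕ) (hk : 0 < k) (hks : ¬ IsSquare k) (a b : ℤ)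
    (ha1 : 1 ≤ a) (hab : a ≤ b)
    (T : ℕ) (hT : (T:ℤ) = b - a) (hbig : k * (b.toNat)^2 < T^4) :
    ((qBox a b).filter (fun x : ℤ×ℤ×ℤ×ℤ => ∃ d : ℕ, d.Prime ∧ T < d ∧
        (d:ℤ) ∣ (x.1^2 - (k:ℤ)*x.2.1^2) ∧
        (d:ℤ) ∣ (x.2.2.1^2 - (k:ℤ)*x.2.2.2^2))).card
      ≤ 6 * (Finset.Icc a b).card ^ 3 := by
  classical
  set I : Finset ℤ := Finset.Icc a b with hIdef
  set n : ℕ := I.card with hndef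
  set U₃ : Finset (ℤ×ℤ×ℤ×ℤ) := (qBox a b).filter (fun x : ℤ×ℤ×ℤ×ℤ =>
      ∃ d : ℕ, d.Prime ∧ T < d ∧
        (d:ℤ) ∣ (x.1^2 - (k:ℤ)*x.2.1^2) ∧
        (d:ℤ) ∣ (x.2.2.1^2 - (k:ℤ)*x.2.2.2^2)) with hU₃def
  have hmap : ∀ x ∈ U₃, (x.1, x.2.1) ∈ I ×ˢ I := by
    intro x hx
    have hm := qBox_mem (Finset.mem_filter.mp hx).1
    rw [Finset.mem_product]
    exact ⟨hm.1, hm.2.1⟩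
  have hcard := Finset.card_eq_sum_card_fiberwise hmap
  have hfiber : ∀ p ∈ I ×ˢ I, (U₃.filter (fun x => (x.1, x.2.1) = p)).card ≤ 6 * n := by
    intro p hp
    rw [Finset.mem_product, hIdef, Finset.mem_Icc, Finset.mem_Icc] at hp
    have hp2 : p.2 ≠ 0 := by omega
    set Ap : ℤ := p.1^2 - (k:ℤ)*p.2^2 with hApdef
    have hAp0 : Ap ≠ 0 := aux_ne_zero k hks p.1 p.2 hp2
    have hAbs : Ap.natAbs ≤ k * (b.toNat)^2 := by
      have hb0 : (b.toNat : ℤ) = b := Int.toNat_of_nonneg (by omega)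
      have hk1 : (1:ℤ) ≤ (k:ℤ) := by exact_mod_cast hk
      have hb1 : (1:ℤ) ≤ p.1 := by omega
      have hb2 : (1:ℤ) ≤ p.2 := by omega
      have hp1sq : p.1^2 ≤ b^2 := by nlinarith [hp.1.1, hp.1.2]
      have hp2sq : p.2^2 ≤ b^2 := by nlinarith [hp.2.1, hp.2.2]
      have e1 : (0:ℤ) ≤ (k:ℤ) * p.2^2 := by positivity
      have e2 : (k:ℤ) * p.2^2 ≤ (k:ℤ) * b^2 :=
        mul_le_mul_of_nonneg_left hp2sq (by positivity)
      have e3 : b^2 ≤ (k:ℤ) * b^2 := by nlinarith [sq_nonneg b]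
      have h1 : Ap ≤ (k:ℤ)*b^2 := by
        have : Ap ≤ p.1^2 := by rw [hApdef]; linarith
        linarith
      have h2 : -((k:ℤ)*b^2) ≤ Ap := by
        have : -Ap ≤ (k:ℤ) * p.2^2 := by rw [hApdef]; nlinarith [sq_nonneg p.1]
        linarith
      have h3 : |Ap| ≤ (k:ℤ)*b^2 := abs_le.mpr ⟨h2, h1⟩
      have h4 : ((Ap.natAbs : ℤ)) ≤ (k:ℤ) * ((b.toNat:ℤ))^2 := by
        rw [Int.abs_eq_natAbs] at h3
        rw [hb0]
        exact_mod_cast h3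
      exact_mod_cast h4
    have hAbig : Ap.natAbs < T^4 := lt_of_le_of_lt hAbs hbig
    set S : Finset ℕ := (Ap.natAbs.primeFactors).filter (fun d => T < d) with hSdef
    have hS3 : S.card ≤ 3 := aux_bigfactors Ap.natAbs T (Int.natAbs_ne_zero.mpr hAp0) hAbig
    have hFd : ∀ d ∈ S, ((I ×ˢ I).filter
        (fun q : ℤ×ℤ => (d:ℤ) ∣ q.1^2 - (k:ℤ)*q.2^2)).card ≤ 2 * n := by
      intro d hd
      rw [hSdef, Finset.mem_filter] at hd
      have hdp : d.Prime := Nat.prime_of_mem_primeFactors hd.1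
      have hdT : T < d := hd.2
      have h1 := aux_pair_count k a b hab d hdp
      have h0 : (b - a) / (d:ℤ) = 0 := by
        apply Int.ediv_eq_zero_of_lt (by omega)
        omega
      rw [h0] at h1
      rw [← hIdef, ← hndef] at h1
      have : (((I ×ˢ I).filter
          (fun q : ℤ×ℤ => (d:ℤ) ∣ q.1^2 - (k:ℤ)*q.2^2)).card : ℤ) ≤ (n:ℤ) * 2 := by
        linarith
      omega
    have hinj := Finset.card_le_card_of_injOn
      (f := fun x : ℤ×ℤ×ℤ×ℤ => (x.2.2.1, x.2.2.2))
      (s := U₃.filter (fun x => (x.1, x.2.1) = p))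
      (t := S.biUnion (fun d => (I ×ˢ I).filter
          (fun q : ℤ×ℤ => (d:ℤ) ∣ q.1^2 - (k:ℤ)*q.2^2)))
      (by
        intro x hx
        rw [Finset.mem_coe, Finset.mem_filter] at hx
        obtain ⟨hxU, hxp⟩ := hx
        rw [hU₃def, Finset.mem_filter] at hxU
        obtain ⟨hxB, d, hdp, hdT, h1, h2⟩ := hxU
        have hx1 : x.1 = p.1 := congrArg Prod.fst hxp
        have hx2 : x.2.1 = p.2 := congrArg Prod.snd hxp
        have h1' : (d:ℤ) ∣ Ap := by
          rw [hApdef, ← hx1, ← hx2]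
          exact h1
        rw [Finset.mem_coe, Finset.mem_biUnion]
        refine ⟨d, ?_, ?_⟩
        · rw [hSdef, Finset.mem_filter]
          refine ⟨Nat.mem_primeFactors.mpr ⟨hdp, ?_, Int.natAbs_ne_zero.mpr hAp0⟩, hdT⟩
          exact Int.natCast_dvd_natCast.mp (Int.dvd_natAbs.mpr h1')
        · rw [Finset.mem_filter]
          have hm := qBox_mem hxB
          exact ⟨Finset.mem_product.mpr ⟨hm.2.2.1, hm.2.2.2⟩, h2⟩)
      (by
        intro x hx y hy h
        rw [Finset.mem_coe, Finset.mem_filter] at hx hy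
        simp only [Prod.mk.injEq] at h
        have hx1 : x.1 = p.1 := congrArg Prod.fst hx.2
        have hx2 : x.2.1 = p.2 := congrArg Prod.snd hx.2
        have hy1 : y.1 = p.1 := congrArg Prod.fst hy.2
        have hy2 : y.2.1 = p.2 := congrArg Prod.snd hy.2
        exact Prod.ext (hx1.trans hy1.symm)
          (Prod.ext (hx2.trans hy2.symm) (Prod.ext h.1 h.2)))
    have hbiU : (S.biUnion (fun d => (I ×ˢ I).filter
        (fun q : ℤ×ℤ => (d:ℤ) ∣ q.1^2 - (k:ℤ)*q.2^2))).card ≤ 6 * n := by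
      calc (S.biUnion _).card ≤ ∑ d ∈ S, ((I ×ˢ I).filter
            (fun q : ℤ×ℤ => (d:ℤ) ∣ q.1^2 - (k:ℤ)*q.2^2)).card := Finset.card_biUnion_le
        _ ≤ ∑ _d ∈ S, 2 * n := Finset.sum_le_sum hFd
        _ = S.card * (2 * n) := by rw [Finset.sum_const, smul_eq_mul]
        _ ≤ 3 * (2 * n) := by
            have := Nat.mul_le_mul_right (2 * n) hS3
            omega
        _ = 6 * n := by ring
    omega
  calc U₃.card = ∑ p ∈ I ×ˢ I, (U₃.filter (fun x => (x.1, x.2.1) = p)).card := hcard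
    _ ≤ ∑ _p ∈ I ×ˢ I, 6 * n := Finset.sum_le_sum hfiber
    _ = (I ×ˢ I).card * (6 * n) := by rw [Finset.sum_const, smul_eq_mul]
    _ = 6 * n^3 := by rw [Finset.card_product, ← hndef]; ring

open Classical in
/-- Main counting bound. -/
lemma aux_main (k : ℕ) (hk : 0 < k) (hks : ¬ IsSquare k) (a b : ℤ)
    (ha1 : 1 ≤ a) (hab : a ≤ b)
    (hbig : k * (b.toNat)^2 < ((b - a).toNat)^4) :
    (((Finset.Icc a b).card : ℝ))^4 ≤
      (((qBox a b).filter (fun x : ℤ×ℤ×ℤ×ℤ =>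
        (¬ ∃ d : ℕ, d.Prime ∧ 5 < d ∧
          (d : ℤ) ∣ (x.1 ^ 2 - (k : ℤ) * x.2.1 ^ 2) ∧
          (d : ℤ) ∣ (x.2.2.1 ^ 2 - (k : ℤ) * x.2.2.2 ^ 2)) ∧
        (¬ ∃ d : ℕ, d.Prime ∧ 5 < d ∧ (d : ℤ) ∣ x.1 ∧ (d : ℤ) ∣ x.2.1))).card : ℝ)
      + (3125/3456 * ((Finset.Icc a b).card:ℝ)^4
         + 2506 * ((Finset.Icc a b).card:ℝ)^3
         + 625 * ((Finset.Icc a b).card:ℝ)^2 * (b.toNat : ℝ)) := by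
  classical
  set n : ℕ := (Finset.Icc a b).card with hndef
  set T : ℕ := (b - a).toNat with hTdef
  have hT : (T:ℤ) = b - a := Int.toNat_of_nonneg (by omega)
  set b' : ℕ := b.toNat with hb'def
  have hb'Z : (b':ℤ) = b := Int.toNat_of_nonneg (by omega)
  set P : (ℤ×ℤ×ℤ×ℤ) → Prop := fun x =>
        (¬ ∃ d : ℕ, d.Prime ∧ 5 < d ∧
          (d : ℤ) ∣ (x.1 ^ 2 - (k : ℤ) * x.2.1 ^ 2) ∧
          (d : ℤ) ∣ (x.2.2.1 ^ 2 - (k : ℤ) * x.2.2.2 ^ 2)) ∧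
        (¬ ∃ d : ℕ, d.Prime ∧ 5 < d ∧ (d : ℤ) ∣ x.1 ∧ (d : ℤ) ∣ x.2.1) with hPdef
  set Good : Finset (ℤ×ℤ×ℤ×ℤ) := (qBox a b).filter P with hGooddef
  set Bad : Finset (ℤ×ℤ×ℤ×ℤ) := (qBox a b).filter (fun x => ¬ P x) with hBaddef
  have hGB : Good.card + Bad.card = n^4 := by
    rw [hGooddef, hBaddef, Finset.card_filter_add_card_filter_not, qBox_card, hndef]
  set U₁ : Finset (ℤ×ℤ×ℤ×ℤ) := ((Finset.Icc 7 T).filter Nat.Prime).biUnion (fun d =>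
      (qBox a b).filter (fun x : ℤ×ℤ×ℤ×ℤ =>
        (d:ℤ) ∣ (x.1^2 - (k:ℤ)*x.2.1^2) ∧
        (d:ℤ) ∣ (x.2.2.1^2 - (k:ℤ)*x.2.2.2^2))) with hU₁def
  set U₂ : Finset (ℤ×ℤ×ℤ×ℤ) := ((Finset.Icc 7 b').filter Nat.Prime).biUnion (fun d =>
      (qBox a b).filter (fun x : ℤ×ℤ×ℤ×ℤ =>
        (d:ℤ) ∣ x.1 ∧ (d:ℤ) ∣ x.2.1)) with hU₂def
  set U₃ : Finset (ℤ×ℤ×ℤ×ℤ) := (qBox a b).filter (fun x : ℤ×ℤ×ℤ×ℤ =>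
      ∃ d : ℕ, d.Prime ∧ T < d ∧
        (d:ℤ) ∣ (x.1^2 - (k:ℤ)*x.2.1^2) ∧
        (d:ℤ) ∣ (x.2.2.1^2 - (k:ℤ)*x.2.2.2^2)) with hU₃def
  have hn7 : ¬ Nat.Prime 6 := by decide
  have hcover : Bad ⊆ (U₁ ∪ U₂) ∪ U₃ := by
    intro x hx
    rw [hBaddef, Finset.mem_filter] at hx
    obtain ⟨hxB, hxbad⟩ := hx
    rw [hPdef] at hxbad
    rw [not_and_or, not_not, not_not] at hxbad
    have hm := qBox_mem hxB
    rcases hxbad with ⟨d, hdp, hd5, h1, h2⟩ | ⟨d, hdp, hd5, h1, h2⟩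
    · have h7 : 7 ≤ d := by
        by_contra hlt
        push_neg at hlt
        have : d = 6 := by omega
        rw [this] at hdp
        exact hn7 hdp
      rcases le_or_gt d T with hdT | hdT
      · refine Finset.mem_union_left _ (Finset.mem_union_left _ ?_)
        rw [hU₁def, Finset.mem_biUnion]
        exact ⟨d, by rw [Finset.mem_filter, Finset.mem_Icc]; exact ⟨⟨h7, hdT⟩, hdp⟩,
          Finset.mem_filter.mpr ⟨hxB, h1, h2⟩⟩
      · refine Finset.mem_union_right _ ?_
        rw [hU₃def, Finset.mem_filter]
        exact ⟨hxB, d, hdp, hdT, h1, h2⟩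
    · have h7 : 7 ≤ d := by
        by_contra hlt
        push_neg at hlt
        have : d = 6 := by omega
        rw [this] at hdp
        exact hn7 hdp
      have hx1pos : 0 < x.1 := by
        have := Finset.mem_Icc.mp hm.1
        omega
      have hdb : (d:ℤ) ≤ b := by
        have hd1 : (d:ℤ) ≤ x.1 := Int.le_of_dvd hx1pos h1
        have := Finset.mem_Icc.mp hm.1
        omega
      have hdb' : d ≤ b' := by
        have : (d:ℤ) ≤ (b':ℤ) := by rw [hb'Z]; exact hdb
        exact_mod_cast this
      refine Finset.mem_union_left _ (Finset.mem_union_right _ ?_)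
      rw [hU₂def, Finset.mem_biUnion]
      exact ⟨d, by rw [Finset.mem_filter, Finset.mem_Icc]; exact ⟨⟨h7, hdb'⟩, hdp⟩,
        Finset.mem_filter.mpr ⟨hxB, h1, h2⟩⟩
  have hBadle : Bad.card ≤ U₁.card + U₂.card + U₃.card := by
    calc Bad.card ≤ ((U₁ ∪ U₂) ∪ U₃).card := Finset.card_le_card hcover
      _ ≤ (U₁ ∪ U₂).card + U₃.card := Finset.card_union_le _ _
      _ ≤ U₁.card + U₂.card + U₃.card := by
          have := Finset.card_union_le U₁ U₂
          omega
  have hU1R : ((U₁.card : ℕ) : ℝ) ≤ 625/864 * (n:ℝ)^4 + 2500 * (n:ℝ)^3 := by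
    rw [hU₁def]
    exact aux_U1 k a b hab T (by omega)
  have hU2R : ((U₂.card : ℕ) : ℝ) ≤ 625/3456 * (n:ℝ)^4 + 625 * (n:ℝ)^2 * (b':ℝ) := by
    rw [hU₂def]
    exact aux_U2 a b hab b'
  have hU3R : ((U₃.card : ℕ) : ℝ) ≤ 6 * (n:ℝ)^3 := by
    have h := aux_U3 k hk hks a b ha1 hab T hT (by rw [hTdef] at *; exact hbig)
    rw [← hU₃def, ← hndef] at h
    exact_mod_cast h
  have hGBR : (Good.card : ℝ) + (Bad.card : ℝ) = (n:ℝ)^4 := by exact_mod_cast hGB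
  have hBadR : (Bad.card : ℝ) ≤ (U₁.card : ℝ) + (U₂.card : ℝ) + (U₃.card : ℝ) := by
    exact_mod_cast hBadle
  have : (Bad.card : ℝ) ≤ 3125/3456 * (n:ℝ)^4 + 2506 * (n:ℝ)^3 + 625 * (n:ℝ)^2 * (b':ℝ) := by
    calc (Bad.card : ℝ) ≤ (U₁.card : ℝ) + (U₂.card : ℝ) + (U₃.card : ℝ) := hBadR
      _ ≤ (625/864 * (n:ℝ)^4 + 2500 * (n:ℝ)^3) + (625/3456 * (n:ℝ)^4 + 625 * (n:ℝ)^2 * (b':ℝ))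
          + 6 * (n:ℝ)^3 := by linarith
      _ = 3125/3456 * (n:ℝ)^4 + 2506 * (n:ℝ)^3 + 625 * (n:ℝ)^2 * (b':ℝ) := by ring
  linarith

/-- Counting admissible quadruples: a positive proportion of quadruples
`(p₁,p₂,q₁,q₂)` in `[c√M, √M]⁴` satisfy the divisibility constraints. -/
theorem admissible_quadruples (k : ℕ) (hk : 0 < k) (hks : ¬ IsSquare k)
    (c : ℝ) (hc0 : 0 < c) (hc1 : c < 1) :
    ∃ c₄ M₀ : ℝ, 0 < c₄ ∧
      ∀ M : ℝ, M₀ ≤ M →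
        c₄ * M ^ 2 ≤
          (({x : ℤ × ℤ × ℤ × ℤ |
            (c * Real.sqrt M ≤ (x.1 : ℝ) ∧ (x.1 : ℝ) ≤ Real.sqrt M) ∧
            (c * Real.sqrt M ≤ (x.2.1 : ℝ) ∧ (x.2.1 : ℝ) ≤ Real.sqrt M) ∧
            (c * Real.sqrt M ≤ (x.2.2.1 : ℝ) ∧ (x.2.2.1 : ℝ) ≤ Real.sqrt M) ∧
            (c * Real.sqrt M ≤ (x.2.2.2 : ℝ) ∧ (x.2.2.2 : ℝ) ≤ Real.sqrt M) ∧
            (¬ ∃ d : ℕ, d.Prime ∧ 5 < d ∧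
              (d : ℤ) ∣ (x.1 ^ 2 - (k : ℤ) * x.2.1 ^ 2) ∧
              (d : ℤ) ∣ (x.2.2.1 ^ 2 - (k : ℤ) * x.2.2.2 ^ 2)) ∧
            (¬ ∃ d : ℕ, d.Prime ∧ 5 < d ∧ (d : ℤ) ∣ x.1 ∧ (d : ℤ) ∣ x.2.1)}).ncard : ℝ) := by
  classical
  have hγ0 : (0:ℝ) < (1 - c)/2 := by linarith
  set γ : ℝ := (1 - c)/2 with hγdef
  set C₂ : ℝ := 2507 + 625/γ with hC₂def
  have hC₂ : 0 < C₂ := by positivity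
  set M₀ : ℝ := (4/γ + 21*C₂/γ)^2 + 16*(k:ℝ)/γ^4 + 1 with hM₀def
  refine ⟨331/6912 * γ^4, M₀, by positivity, ?_⟩
  intro M hM
  have hMp1 : (0:ℝ) ≤ (4/γ + 21*C₂/γ)^2 := by positivity
  have hMp2 : (0:ℝ) ≤ 16*(k:ℝ)/γ^4 := by positivity
  have hM1 : 1 ≤ M := by rw [hM₀def] at hM; linarith
  set s : ℝ := Real.sqrt M with hsdef
  have hs0 : 0 < s := Real.sqrt_pos.mpr (by linarith)
  have hs2 : s^2 = M := Real.sq_sqrt (by linarith)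
  have hsX : 4/γ + 21*C₂/γ ≤ s := by
    have hX0 : (0:ℝ) ≤ 4/γ + 21*C₂/γ := by positivity
    have h1 : (4/γ + 21*C₂/γ)^2 ≤ M := by rw [hM₀def] at hM; linarith
    calc 4/γ + 21*C₂/γ = Real.sqrt ((4/γ + 21*C₂/γ)^2) := (Real.sqrt_sq hX0).symm
      _ ≤ s := Real.sqrt_le_sqrt h1
  have hγs4 : 4 ≤ γ * s := by
    have h1 : 4/γ ≤ s := by
      have : (0:ℝ) ≤ 21*C₂/γ := by positivity
      linarith
    calc (4:ℝ) = γ * (4/γ) := by field_simp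
      _ ≤ γ * s := by nlinarith
  have hγsC : 21 * C₂ ≤ γ * s := by
    have h1 : 21*C₂/γ ≤ s := by
      have : (0:ℝ) ≤ 4/γ := by positivity
      linarith
    calc 21*C₂ = γ * (21*C₂/γ) := by field_simp
      _ ≤ γ * s := by nlinarith
  have hMk : 16*(k:ℝ)/γ^4 ≤ M := by rw [hM₀def] at hM; linarith
  set a : ℤ := ⌈c * s⌉ with hadef
  set b : ℤ := ⌊s⌋ with hbdef
  have ha1 : 1 ≤ a := by
    have : 0 < a := Int.ceil_pos.mpr (by positivity)
    omega
  have haR : (a:ℝ) < c*s + 1 := Int.ceil_lt_add_one _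
  have hbR : s - 1 < (b:ℝ) := Int.sub_one_lt_floor _
  have hbs : (b:ℝ) ≤ s := Int.floor_le _
  have hcs : c * s ≤ (a:ℝ) := Int.le_ceil _
  set len : ℤ := b - a with hlendef
  have hlenR : γ * s + 2 ≤ (len:ℝ) := by
    have : (len:ℝ) = (b:ℝ) - (a:ℝ) := by push_cast [hlendef]; ring
    rw [this, hγdef]; nlinarith
  have hlen0 : 0 < len := by
    have : (0:ℝ) < (len:ℝ) := by nlinarith
    exact_mod_cast this
  have hab : a ≤ b := by omega
  set I : Finset ℤ := Finset.Icc a b with hIdef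
  set n : ℕ := I.card with hndef
  have hnZ : (n:ℤ) = len + 1 := by
    rw [hndef, hIdef, Int.card_Icc]; omega
  have hnR : (n:ℝ) = (len:ℝ) + 1 := by exact_mod_cast hnZ
  have hγsn : γ * s ≤ (n:ℝ) := by linarith
  have hlenR0 : (0:ℝ) ≤ (len:ℝ) := by exact_mod_cast hlen0.le
  have hn1 : (1:ℝ) ≤ (n:ℝ) := by linarith
  have hb'R : ((b.toNat:ℕ):ℝ) ≤ s := by
    have h1 : ((b.toNat:ℕ):ℤ) = b := Int.toNat_of_nonneg (by omega)
    have h2 : ((b.toNat:ℕ):ℝ) = (b:ℝ) := by exact_mod_cast congrArg (Int.cast : ℤ → ℝ) h1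
    linarith
  -- the numeric hypothesis for aux_main
  have hbig : k * (b.toNat)^2 < ((b - a).toNat)^4 := by
    have hTR : ((len.toNat:ℕ):ℝ) = (len:ℝ) := by
      have : ((len.toNat:ℕ):ℤ) = len := Int.toNat_of_nonneg hlen0.le
      exact_mod_cast congrArg (Int.cast : ℤ → ℝ) this
    have hk1 : (1:ℝ) ≤ (k:ℝ) := by exact_mod_cast hk
    have h1 : (k:ℝ) * ((b.toNat:ℕ):ℝ)^2 ≤ (k:ℝ) * M := by
      have : ((b.toNat:ℕ):ℝ)^2 ≤ M := by nlinarith [Nat.cast_nonneg (α := ℝ) b.toNat]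
      nlinarith
    have h2 : γ^4 * M^2 ≤ ((len.toNat:ℕ):ℝ)^4 := by
      rw [hTR]
      have hγs0 : (0:ℝ) ≤ γ * s := by positivity
      have : (γ*s)^4 ≤ (len:ℝ)^4 := by
        apply pow_le_pow_left₀ hγs0 (by linarith)
      calc γ^4 * M^2 = (γ*s)^4 := by rw [← hs2]; ring
        _ ≤ (len:ℝ)^4 := this
    have h3 : (k:ℝ) * M < γ^4 * M^2 := by
      have hγ4 : (0:ℝ) < γ^4 := by positivity
      have : 16*(k:ℝ) ≤ γ^4 * M := by
        have := mul_le_mul_of_nonneg_left hMk hγ4.le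
        have e0 : γ^4 * (16*(k:ℝ)/γ^4) = 16*(k:ℝ) := by field_simp
        nlinarith
      nlinarith
    have h4 : (k:ℝ) * ((b.toNat:ℕ):ℝ)^2 < ((len.toNat:ℕ):ℝ)^4 := by linarith
    have h5 : ((k * (b.toNat)^2 : ℕ):ℝ) < (((len.toNat)^4 : ℕ):ℝ) := by push_cast; push_cast at h4; linarith
    have h6 : k * (b.toNat)^2 < (len.toNat)^4 := by exact_mod_cast h5
    rw [hlendef] at h6
    exact h6
  -- identify the set with the filtered box
  set Good : Finset (ℤ×ℤ×ℤ×ℤ) := (qBox a b).filter (fun x : ℤ×ℤ×ℤ×ℤ =>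
        (¬ ∃ d : ℕ, d.Prime ∧ 5 < d ∧
          (d : ℤ) ∣ (x.1 ^ 2 - (k : ℤ) * x.2.1 ^ 2) ∧
          (d : ℤ) ∣ (x.2.2.1 ^ 2 - (k : ℤ) * x.2.2.2 ^ 2)) ∧
        (¬ ∃ d : ℕ, d.Prime ∧ 5 < d ∧ (d : ℤ) ∣ x.1 ∧ (d : ℤ) ∣ x.2.1)) with hGooddef
  have hsetEq : {x : ℤ × ℤ × ℤ × ℤ |
            (c * s ≤ (x.1 : ℝ) ∧ (x.1 : ℝ) ≤ s) ∧
            (c * s ≤ (x.2.1 : ℝ) ∧ (x.2.1 : ℝ) ≤ s) ∧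
            (c * s ≤ (x.2.2.1 : ℝ) ∧ (x.2.2.1 : ℝ) ≤ s) ∧
            (c * s ≤ (x.2.2.2 : ℝ) ∧ (x.2.2.2 : ℝ) ≤ s) ∧
            (¬ ∃ d : ℕ, d.Prime ∧ 5 < d ∧
              (d : ℤ) ∣ (x.1 ^ 2 - (k : ℤ) * x.2.1 ^ 2) ∧
              (d : ℤ) ∣ (x.2.2.1 ^ 2 - (k : ℤ) * x.2.2.2 ^ 2)) ∧
            (¬ ∃ d : ℕ, d.Prime ∧ 5 < d ∧ (d : ℤ) ∣ x.1 ∧ (d : ℤ) ∣ x.2.1)}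
      = (Good : Set (ℤ × ℤ × ℤ × ℤ)) := by
    ext x
    simp only [Set.mem_setOf_eq, hGooddef, Finset.coe_filter, Set.mem_setOf_eq,
      qBox, Finset.mem_product, Finset.mem_Icc]
    have hiff : ∀ z : ℤ, (c * s ≤ (z:ℝ) ∧ (z:ℝ) ≤ s) ↔ (a ≤ z ∧ z ≤ b) := by
      intro z
      rw [hadef, hbdef]
      constructor
      · rintro ⟨h1, h2⟩; exact ⟨Int.ceil_le.mpr h1, Int.le_floor.mpr h2⟩
      · rintro ⟨h1, h2⟩
        refine ⟨?_, Int.le_floor.mp h2⟩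
        calc c*s ≤ ((⌈c*s⌉:ℤ):ℝ) := Int.le_ceil _
          _ ≤ (z:ℝ) := by exact_mod_cast h1
    rw [hiff x.1, hiff x.2.1, hiff x.2.2.1, hiff x.2.2.2]
    tauto
  rw [hsetEq, Set.ncard_coe_finset]
  -- apply the main counting bound
  have hmain := aux_main k hk hks a b ha1 hab hbig
  rw [← hIdef, ← hndef, ← hGooddef] at hmain
  -- final arithmetic
  have hb'n : ((b.toNat:ℕ):ℝ) ≤ (n:ℝ)/γ := by
    have h1 : s ≤ (n:ℝ)/γ := by
      rw [le_div_iff₀ hγ0]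
      nlinarith
    linarith
  have hnn : (0:ℝ) ≤ (n:ℝ) := by linarith
  have hBadTotal : 3125/3456 * (n:ℝ)^4 + 2506 * (n:ℝ)^3 + 625 * (n:ℝ)^2 * ((b.toNat:ℕ):ℝ)
      ≤ 3125/3456 * (n:ℝ)^4 + (2506 + 625/γ) * (n:ℝ)^3 := by
    have h1 : 625 * (n:ℝ)^2 * ((b.toNat:ℕ):ℝ) ≤ 625 * (n:ℝ)^2 * ((n:ℝ)/γ) := by
      apply mul_le_mul_of_nonneg_left hb'n (by positivity)
    have h2 : 625 * (n:ℝ)^2 * ((n:ℝ)/γ) = 625/γ * (n:ℝ)^3 := by field_simp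
    linarith
  have hnbig : 21 * C₂ ≤ (n:ℝ) := by linarith
  have hsmall : (2506 + 625/γ) * (n:ℝ)^3 ≤ 331/6912 * (n:ℝ)^4 := by
    have h1 : 2506 + 625/γ ≤ 331/6912 * (n:ℝ) := by
      have e1 : (331:ℝ)/6912 * (21 * C₂) = (6951/6912) * C₂ := by ring
      have e2 : (2506:ℝ) + 625/γ ≤ C₂ := by
        rw [hC₂def]; linarith
      have e3 : (0:ℝ) < C₂ := hC₂
      nlinarith [mul_le_mul_of_nonneg_left hnbig (show (0:ℝ) ≤ 331/6912 by norm_num)]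
    nlinarith [pow_nonneg hnn 3]
  have hGoodBig : 331/6912 * (n:ℝ)^4 ≤ (Good.card : ℝ) := by
    nlinarith [hmain, hBadTotal, hsmall]
  have hfinal : 331/6912 * γ^4 * M^2 ≤ 331/6912 * (n:ℝ)^4 := by
    have hγs0 : (0:ℝ) ≤ γ * s := by positivity
    have h1 : (γ*s)^4 ≤ (n:ℝ)^4 := pow_le_pow_left₀ hγs0 hγsn 4
    have h2 : γ^4 * M^2 = (γ*s)^4 := by rw [← hs2]; ring
    nlinarith
  linarith
end

section
/- (Energy bound) There exists an absolute constant C > 0 such that for all finite sets A, B, X ⊆ ℝ with |X| ≤ |A|·|B|, one has Σ_{x ∈ X} E⁺(A, x·B) ≤ C·|A|^{3/2}·|B|^{3/2}·|X|^{1/2}. -/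
/-- The additive energy `E⁺(A,B)`: the number of quadruples `(a, a', b, b') ∈ A×A×B×B`
with `a + b = a' + b'`. -/
noncomputable def addEnergy (A B : Set ℝ) : ℕ :=
  {x : ℝ × ℝ × ℝ × ℝ | x.1 ∈ A ∧ x.2.1 ∈ A ∧ x.2.2.1 ∈ B ∧ x.2.2.2 ∈ B ∧
    x.1 + x.2.2.1 = x.2.1 + x.2.2.2}.ncard


section Generic
open Finset
variable {α β γ : Type*} [DecidableEq β] [DecidableEq γ]

/-- Pair-counting: number of pairs with equal `g`-value equals sum of squared fiber sizes. -/
lemma card_pairs_eq (P : Finset α) (g : α → β) :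
    ((P ×ˢ P).filter (fun pq => g pq.1 = g pq.2)).card
      = ∑ s ∈ P.image g, ((P.filter (fun p => g p = s)).card) ^ 2 := by
  classical
  rw [Finset.card_eq_sum_card_fiberwise
    (f := fun pq : α × α => g pq.1) (t := P.image g)
    (fun pq hpq => by
      simp only [mem_coe, mem_filter, mem_product] at hpq
      exact mem_image_of_mem _ hpq.1.1)]
  refine Finset.sum_congr rfl fun s _ => ?_
  rw [Finset.filter_filter]
  have h : ((P ×ˢ P).filter fun pq => (g pq.1 = g pq.2) ∧ g pq.1 = s)
      = (P.filter (fun p => g p = s)) ×ˢ (P.filter (fun p => g p = s)) := by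
    rw [← Finset.filter_product]
    apply Finset.filter_congr
    intro pq _
    constructor
    · rintro ⟨h1, h2⟩; exact ⟨h2, h1 ▸ h2⟩
    · rintro ⟨h1, h2⟩; exact ⟨h1.trans h2.symm, h1⟩
  rw [h, Finset.card_product, sq]

/-- If every fiber of `g` has size at most `t`, the number of equal pairs is ≤ `|P| * t`. -/
lemma card_pairs_le (P : Finset α) (g : α → β) (t : ℕ)
    (ht : ∀ s, (P.filter (fun p => g p = s)).card ≤ t) :
    ((P ×ˢ P).filter (fun pq => g pq.1 = g pq.2)).card ≤ P.card * t := by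
  classical
  rw [card_pairs_eq, Finset.card_eq_sum_card_image g P, Finset.sum_mul]
  refine Finset.sum_le_sum fun s _ => ?_
  rw [sq]
  exact Nat.mul_le_mul_left _ (ht s)

/-- Cauchy–Schwarz in ℕ: `(∑ f)^2 ≤ |I| * ∑ f^2`. -/
lemma sq_sum_le (I : Finset γ) (f : γ → ℕ) :
    (∑ v ∈ I, f v) ^ 2 ≤ I.card * ∑ v ∈ I, (f v) ^ 2 := by
  have h := Finset.sum_mul_sq_le_sq_mul_sq I (fun _ => 1) f
  simp only [one_mul, one_pow] at h
  calc (∑ v ∈ I, f v) ^ 2 ≤ (∑ _v ∈ I, 1) * ∑ v ∈ I, (f v) ^ 2 := h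
    _ = I.card * ∑ v ∈ I, (f v) ^ 2 := by rw [Finset.sum_const, smul_eq_mul, mul_one]

/-- Refinement Cauchy–Schwarz: if `F` refines `f` (first coordinate) and each `f`-fiber
maps onto at most `m0` distinct `F`-values, then equal-`f` pairs ≤ `m0 *` equal-`F` pairs. -/
lemma card_pairs_refine (P : Finset α) (f : α → β) (F : α → β × γ)
    (hF : ∀ p, (F p).1 = f p) (m0 : ℕ)
    (hm : ∀ s ∈ P.image f, ((P.filter (fun p => f p = s)).image F).card ≤ m0) :
    ((P ×ˢ P).filter (fun pq => f pq.1 = f pq.2)).card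
      ≤ m0 * ((P ×ˢ P).filter (fun pq => F pq.1 = F pq.2)).card := by
  classical
  rw [card_pairs_eq P f, card_pairs_eq P F]
  have key : ∀ s ∈ P.image f,
      ((P.filter (fun p => f p = s)).card) ^ 2
        ≤ m0 * ∑ v ∈ (P.image F).filter (fun v => v.1 = s),
            ((P.filter (fun p => F p = v)).card) ^ 2 := by
    intro s hs
    have himg : (P.filter (fun p => f p = s)).image F
        = (P.image F).filter (fun v => v.1 = s) := by
      ext v
      simp only [mem_image, mem_filter]
      constructor
      · rintro ⟨p, hp, rfl⟩
        exact ⟨⟨p, hp.1, rfl⟩, (hF p).trans hp.2⟩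
      · rintro ⟨⟨p, hp, rfl⟩, hv⟩
        exact ⟨p, ⟨hp, (hF p).symm.trans hv⟩, rfl⟩
    have hdec : (P.filter (fun p => f p = s)).card
        = ∑ v ∈ (P.filter (fun p => f p = s)).image F,
            ((P.filter (fun p => F p = v)).card) := by
      rw [Finset.card_eq_sum_card_image F (P.filter (fun p => f p = s))]
      refine Finset.sum_congr rfl fun v hv => ?_
      rw [Finset.filter_filter]
      congr 1
      apply Finset.filter_congr
      intro p _
      simp only [mem_image, mem_filter] at hv
      obtain ⟨q, hq, rfl⟩ := hv
      constructor
      · rintro ⟨_, h2⟩; exact h2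
      · intro h; exact ⟨by rw [← hF p, h, hF q]; exact hq.2, h⟩
    calc ((P.filter (fun p => f p = s)).card) ^ 2
        = (∑ v ∈ (P.filter (fun p => f p = s)).image F,
            ((P.filter (fun p => F p = v)).card)) ^ 2 := by rw [hdec]
      _ ≤ ((P.filter (fun p => f p = s)).image F).card
            * ∑ v ∈ (P.filter (fun p => f p = s)).image F,
              ((P.filter (fun p => F p = v)).card) ^ 2 := sq_sum_le _ _
      _ ≤ m0 * ∑ v ∈ (P.image F).filter (fun v => v.1 = s),
              ((P.filter (fun p => F p = v)).card) ^ 2 := by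
          rw [← himg]
          exact Nat.mul_le_mul_right _ (hm s hs)
  calc ∑ s ∈ P.image f, ((P.filter (fun p => f p = s)).card) ^ 2
      ≤ ∑ s ∈ P.image f, m0 * ∑ v ∈ (P.image F).filter (fun v => v.1 = s),
          ((P.filter (fun p => F p = v)).card) ^ 2 := Finset.sum_le_sum key
    _ = m0 * ∑ s ∈ P.image f, ∑ v ∈ (P.image F).filter (fun v => v.1 = s),
          ((P.filter (fun p => F p = v)).card) ^ 2 := by rw [Finset.mul_sum]
    _ = m0 * ∑ v ∈ P.image F, ((P.filter (fun p => F p = v)).card) ^ 2 := by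
        congr 1
        exact Finset.sum_fiberwise_of_maps_to (g := Prod.fst)
          (fun v hv => by
            rw [mem_image] at hv
            obtain ⟨p, hp, rfl⟩ := hv
            rw [hF p]
            exact mem_image_of_mem _ hp) _

end Generic


section Blocks
open Finset

/-- Block index: rank within `A` divided by block size `t`. -/
noncomputable def blk (A : Finset ℝ) (t : ℕ) (r : ℝ) : ℕ :=
  (A.filter (fun a => a < r)).card / t

lemma blk_mono (A : Finset ℝ) (t : ℕ) {r r' : ℝ} (h : r ≤ r') :
    blk A t r ≤ blk A t r' := by
  apply Nat.div_le_div_right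
  apply Finset.card_le_card
  intro a ha
  rw [Finset.mem_filter] at ha ⊢
  exact ⟨ha.1, lt_of_lt_of_le ha.2 h⟩

lemma blk_lt (A : Finset ℝ) {t m : ℕ} (hmt : A.card ≤ m * t) {r : ℝ} (hr : r ∈ A) :
    blk A t r < m := by
  have hrank : (A.filter (fun a => a < r)).card < A.card := by
    apply Finset.card_lt_card
    constructor
    · exact Finset.filter_subset _ _
    · intro hsub
      have := hsub hr
      simp only [Finset.mem_filter] at this
      exact lt_irrefl r this.2
  have ht : 0 < t := by
    rcases Nat.eq_zero_or_pos t with h | h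
    · exfalso; subst h; rw [Nat.mul_zero] at hmt; omega
    · exact h
  unfold blk
  rw [Nat.div_lt_iff_lt_mul ht]
  calc (A.filter (fun a => a < r)).card < A.card := hrank
    _ ≤ m * t := hmt

lemma blk_fiber (A : Finset ℝ) (t : ℕ) (ht : 0 < t) (i : ℕ) :
    (A.filter (fun r => blk A t r = i)).card ≤ t := by
  have := Finset.card_le_card_of_injOn (f := fun r => (A.filter (fun a => a < r)).card)
    (s := A.filter (fun r => blk A t r = i)) (t := Finset.Ico (i * t) (i * t + t))
    ?maps ?inj
  · simpa using this
  case maps =>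
    intro r hr
    rw [Finset.mem_coe, Finset.mem_filter] at hr
    have h1 : (A.filter (fun a => a < r)).card / t = i := hr.2
    have h3 := Nat.mod_lt (A.filter (fun a => a < r)).card ht
    rw [Finset.mem_coe, Finset.mem_Ico]
    change i * t ≤ (A.filter (fun a => a < r)).card ∧
      (A.filter (fun a => a < r)).card < i * t + t
    constructor
    · calc i * t = ((A.filter (fun a => a < r)).card / t) * t := by rw [h1]
        _ ≤ (A.filter (fun a => a < r)).card := Nat.div_mul_le_self _ _
    · calc (A.filter (fun a => a < r)).card
          = t * ((A.filter (fun a => a < r)).card / t)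
            + (A.filter (fun a => a < r)).card % t := (Nat.div_add_mod _ _).symm
        _ = t * i + (A.filter (fun a => a < r)).card % t := by rw [h1]
        _ < t * i + t := by omega
        _ = i * t + t := by ring
  case inj =>
    intro r hr r' hr' heq
    simp only [Finset.coe_filter, Set.mem_setOf_eq] at hr hr'
    by_contra hne
    have strict : ∀ a b : ℝ, a ∈ A → b ∈ A → a < b →
        (A.filter (fun c => c < a)).card < (A.filter (fun c => c < b)).card := by
      intro a b ha hb hab
      apply Finset.card_lt_card
      constructor
      · intro c hc
        rw [Finset.mem_filter] at hc ⊢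
        exact ⟨hc.1, lt_trans hc.2 hab⟩
      · intro hsub
        have := hsub (Finset.mem_filter.2 ⟨ha, hab⟩)
        simp only [Finset.mem_filter] at this
        exact lt_irrefl a this.2
    have heq' : (A.filter (fun c => c < r)).card = (A.filter (fun c => c < r')).card := heq
    rcases lt_trichotomy r r' with h | h | h
    · exact absurd heq' (Nat.ne_of_lt (strict r r' hr.1 hr'.1 h))
    · exact hne h
    · exact absurd heq'.symm (Nat.ne_of_lt (strict r' r hr'.1 hr.1 h))

/-- A line `p.1 + x * p.2 = s` meets at most `2m` cells of the grid partition. -/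
lemma support_bound (A B : Finset ℝ) (φ ψ : ℝ → ℕ) (m : ℕ)
    (hφm : ∀ r ∈ A, φ r < m) (hψm : ∀ r ∈ B, ψ r < m)
    (hφ : ∀ r r' : ℝ, r ≤ r' → φ r ≤ φ r') (hψ : ∀ r r' : ℝ, r ≤ r' → ψ r ≤ ψ r')
    (x s : ℝ) :
    (((A ×ˢ B).filter (fun p : ℝ × ℝ => p.1 + x * p.2 = s)).image
        (fun p => (φ p.1, ψ p.2))).card ≤ 2 * m := by
  classical
  set filt := (A ×ˢ B).filter (fun p : ℝ × ℝ => p.1 + x * p.2 = s) with hfilt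
  set κ : ℕ × ℕ → ℕ := fun c => if 0 < x then c.1 + (m - 1 - c.2) else c.1 + c.2 with hκ
  have hmem : ∀ c ∈ filt.image (fun p : ℝ × ℝ => (φ p.1, ψ p.2)), κ c ∈ Finset.range (2 * m) := by
    intro c hc
    rw [Finset.mem_image] at hc
    obtain ⟨p, hp, rfl⟩ := hc
    rw [hfilt, Finset.mem_filter, Finset.mem_product] at hp
    have h1 := hφm p.1 hp.1.1
    have h2 := hψm p.2 hp.1.2
    rw [Finset.mem_range]
    simp only [hκ]
    split <;> omega
  have key : ∀ p q : ℝ × ℝ, p ∈ filt → q ∈ filt → p.1 < q.1 →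
      κ (φ p.1, ψ p.2) = κ (φ q.1, ψ q.2) → (φ p.1, ψ p.2) = (φ q.1, ψ q.2) := by
    intro p q hp hq hlt hkeq
    rw [hfilt, Finset.mem_filter, Finset.mem_product] at hp hq
    have hi : φ p.1 ≤ φ q.1 := hφ _ _ (le_of_lt hlt)
    have hline : x * (p.2 - q.2) = q.1 - p.1 := by
      have e1 := hp.2; have e2 := hq.2; nlinarith [hp.2, hq.2]
    have hjm : ψ p.2 < m := hψm p.2 hp.1.2
    have hjm' : ψ q.2 < m := hψm q.2 hq.1.2
    by_cases hx : 0 < x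
    · have hj : q.2 < p.2 := by
        by_contra hcon
        push_neg at hcon
        nlinarith [mul_nonneg hx.le (sub_nonneg.2 hcon)]
      have hψle : ψ q.2 ≤ ψ p.2 := hψ _ _ (le_of_lt hj)
      simp only [hκ, if_pos hx] at hkeq
      have : φ p.1 = φ q.1 ∧ ψ p.2 = ψ q.2 := by omega
      rw [Prod.mk.injEq]; exact this
    · have hx' : x < 0 := by
        rcases lt_trichotomy x 0 with h | h | h
        · exact h
        · exfalso; rw [h] at hline; simp at hline; linarith
        · exact absurd h hx
      have hj : p.2 < q.2 := by
        by_contra hcon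
        push_neg at hcon
        nlinarith [mul_nonneg (neg_nonneg.2 hx'.le) (sub_nonneg.2 hcon)]
      have hψle : ψ p.2 ≤ ψ q.2 := hψ _ _ (le_of_lt hj)
      simp only [hκ, if_neg hx] at hkeq
      have : φ p.1 = φ q.1 ∧ ψ p.2 = ψ q.2 := by omega
      rw [Prod.mk.injEq]; exact this
  have hinj : Set.InjOn κ ↑(filt.image (fun p : ℝ × ℝ => (φ p.1, ψ p.2))) := by
    intro c hc c' hc' hkeq
    rw [Finset.mem_coe, Finset.mem_image] at hc hc'
    obtain ⟨p, hp, rfl⟩ := hc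
    obtain ⟨q, hq, rfl⟩ := hc'
    rcases lt_trichotomy p.1 q.1 with h | h | h
    · exact key p q hp hq h hkeq
    · have hφeq : φ p.1 = φ q.1 := by rw [h]
      have hjm : ψ p.2 < m := by
        rw [hfilt, Finset.mem_filter, Finset.mem_product] at hp
        exact hψm p.2 hp.1.2
      have hjm' : ψ q.2 < m := by
        rw [hfilt, Finset.mem_filter, Finset.mem_product] at hq
        exact hψm q.2 hq.1.2
      simp only [hκ] at hkeq
      rw [Prod.mk.injEq]
      refine ⟨hφeq, ?_⟩
      rw [hφeq] at hkeq
      split at hkeq <;> omega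
    · exact (key q p hq hp h hkeq.symm).symm
  calc (filt.image (fun p : ℝ × ℝ => (φ p.1, ψ p.2))).card
      ≤ (Finset.range (2 * m)).card := Finset.card_le_card_of_injOn κ hmem hinj
    _ = 2 * m := Finset.card_range _
end Blocks



section EnergyLink
open Finset
variable (A B : Finset ℝ) (x : ℝ)

/-- The pair-count finset controlling `E⁺(A, x·B)`. -/
noncomputable def Dpairs : Finset ((ℝ × ℝ) × (ℝ × ℝ)) :=
  ((A ×ˢ B) ×ˢ (A ×ˢ B)).filter
    (fun pq => pq.1.1 + x * pq.1.2 = pq.2.1 + x * pq.2.2)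

lemma energy_le_Dpairs :
    _root_.addEnergy (A : Set ℝ) ((fun b => x * b) '' (B : Set ℝ)) ≤ (Dpairs A B x).card := by
  classical
  set B' : Finset ℝ := B.image (fun b => x * b) with hB'
  set E : Finset (ℝ × ℝ × ℝ × ℝ) :=
    (A ×ˢ (A ×ˢ (B' ×ˢ B'))).filter
      (fun q => q.1 + q.2.2.1 = q.2.1 + q.2.2.2) with hE
  have hset : {q : ℝ × ℝ × ℝ × ℝ | q.1 ∈ (A : Set ℝ) ∧ q.2.1 ∈ (A : Set ℝ) ∧
      q.2.2.1 ∈ (fun b => x * b) '' (B : Set ℝ) ∧ q.2.2.2 ∈ (fun b => x * b) '' (B : Set ℝ) ∧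
      q.1 + q.2.2.1 = q.2.1 + q.2.2.2} = (E : Set (ℝ × ℝ × ℝ × ℝ)) := by
    ext q
    simp only [Set.mem_setOf_eq, hE, Finset.coe_filter, Finset.mem_product,
      Set.mem_setOf_eq, hB', Finset.mem_image, Finset.mem_coe]
    constructor
    · rintro ⟨h1, h2, ⟨b1, hb1, hq1⟩, ⟨b2, hb2, hq2⟩, h5⟩
      exact ⟨⟨h1, h2, ⟨b1, hb1, hq1⟩, ⟨b2, hb2, hq2⟩⟩, h5⟩
    · rintro ⟨⟨h1, h2, ⟨b1, hb1, hq1⟩, ⟨b2, hb2, hq2⟩⟩, h5⟩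
      exact ⟨h1, h2, ⟨b1, hb1, hq1⟩, ⟨b2, hb2, hq2⟩, h5⟩
  have hen : _root_.addEnergy (A : Set ℝ) ((fun b => x * b) '' (B : Set ℝ)) = E.card := by
    unfold _root_.addEnergy
    rw [hset, Set.ncard_coe_finset]
  rw [hen]
  apply Finset.card_le_card_of_surjOn
    (fun pq : (ℝ × ℝ) × (ℝ × ℝ) => (pq.1.1, pq.2.1, x * pq.1.2, x * pq.2.2))
  intro q hq
  rw [Finset.mem_coe, hE, Finset.mem_filter, Finset.mem_product, Finset.mem_product,
    Finset.mem_product] at hq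
  obtain ⟨⟨h1, h2, h3, h4⟩, h5⟩ := hq
  rw [hB', Finset.mem_image] at h3 h4
  obtain ⟨b1, hb1, hq1⟩ := h3
  obtain ⟨b2, hb2, hq2⟩ := h4
  refine ⟨((q.1, b1), (q.2.1, b2)), ?_, ?_⟩
  · rw [Finset.mem_coe, Dpairs, Finset.mem_filter, Finset.mem_product,
      Finset.mem_product, Finset.mem_product]
    refine ⟨⟨⟨h1, hb1⟩, ⟨h2, hb2⟩⟩, ?_⟩
    simp only
    rw [hq1, hq2]
    exact h5
  · simp only
    rw [hq1, hq2]

lemma fiber_le_B (s : ℝ) :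
    ((A ×ˢ B).filter (fun p : ℝ × ℝ => p.1 + x * p.2 = s)).card ≤ B.card := by
  classical
  apply Finset.card_le_card_of_injOn (fun p => p.2)
  · intro p hp
    rw [Finset.mem_coe, Finset.mem_filter, Finset.mem_product] at hp
    exact hp.1.2
  · intro p hp q hq h2
    rw [Finset.mem_coe, Finset.mem_filter] at hp hq
    simp only at h2
    have e1 := hp.2; have e2 := hq.2
    rw [h2] at e1
    have : p.1 = q.1 := by linarith
    exact Prod.ext this h2

lemma fiber_le_A (s : ℝ) (hx : x ≠ 0) :
    ((A ×ˢ B).filter (fun p : ℝ × ℝ => p.1 + x * p.2 = s)).card ≤ A.card := by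
  classical
  apply Finset.card_le_card_of_injOn (fun p => p.1)
  · intro p hp
    rw [Finset.mem_coe, Finset.mem_filter, Finset.mem_product] at hp
    exact hp.1.1
  · intro p hp q hq h1
    rw [Finset.mem_coe, Finset.mem_filter] at hp hq
    simp only at h1
    have hmul : x * p.2 = x * q.2 := by
      have e1 := hp.2; have e2 := hq.2
      rw [h1] at e1
      linarith
    exact Prod.ext h1 (mul_left_cancel₀ hx hmul)

lemma energy_at_zero :
    _root_.addEnergy (A : Set ℝ) ((fun b => (0:ℝ) * b) '' (B : Set ℝ)) ≤ A.card := by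
  have hsub : {q : ℝ × ℝ × ℝ × ℝ | q.1 ∈ (A : Set ℝ) ∧ q.2.1 ∈ (A : Set ℝ) ∧
      q.2.2.1 ∈ (fun b => (0:ℝ) * b) '' (B : Set ℝ) ∧
      q.2.2.2 ∈ (fun b => (0:ℝ) * b) '' (B : Set ℝ) ∧
      q.1 + q.2.2.1 = q.2.1 + q.2.2.2}
      ⊆ (fun a : ℝ => (a, a, (0:ℝ), (0:ℝ))) '' (A : Set ℝ) := by
    rintro ⟨a, a', c, c'⟩ ⟨h1, h2, ⟨b1, _, hc⟩, ⟨b2, _, hc'⟩, h5⟩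
    simp only [zero_mul] at hc hc'
    subst hc; subst hc'
    simp only at h5
    have : a' = a := by linarith
    exact ⟨a, h1, by rw [this]⟩
  calc _root_.addEnergy (A : Set ℝ) ((fun b => (0:ℝ) * b) '' (B : Set ℝ))
      ≤ ((fun a : ℝ => (a, a, (0:ℝ), (0:ℝ))) '' (A : Set ℝ)).ncard :=
        Set.ncard_le_ncard hsub (A.finite_toSet.image _)
    _ ≤ (A : Set ℝ).ncard := Set.ncard_image_le A.finite_toSet
    _ = A.card := Set.ncard_coe_finset A

end EnergyLink


section Cells
open Finset

/-- Refined line-and-cell map. -/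
noncomputable def Fcell (A B : Finset ℝ) (t u : ℕ) (x : ℝ) : ℝ × ℝ → ℝ × (ℕ × ℕ) :=
  fun p => (p.1 + x * p.2, (blk A t p.1, blk B u p.2))

lemma Dpairs_le_cell (A B : Finset ℝ) (x : ℝ) (m t u : ℕ)
    (hat : A.card ≤ m * t) (hbu : B.card ≤ m * u) :
    (Dpairs A B x).card ≤ 2 * m *
      (((A ×ˢ B) ×ˢ (A ×ˢ B)).filter
        (fun pq => Fcell A B t u x pq.1 = Fcell A B t u x pq.2)).card := by
  classical
  have h := card_pairs_refine (A ×ˢ B) (fun p : ℝ × ℝ => p.1 + x * p.2)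
    (Fcell A B t u x) (fun p => rfl) (2 * m) ?hm
  · exact h
  case hm =>
    intro s _
    have heq : ((A ×ˢ B).filter (fun p : ℝ × ℝ => p.1 + x * p.2 = s)).image
        (Fcell A B t u x)
        = (((A ×ˢ B).filter (fun p : ℝ × ℝ => p.1 + x * p.2 = s)).image
            (fun p => (blk A t p.1, blk B u p.2))).image (fun c => (s, c)) := by
      rw [Finset.image_image]
      apply Finset.image_congr
      intro p hp
      rw [Finset.mem_coe, Finset.mem_filter] at hp
      simp only [Function.comp, Fcell]
      rw [hp.2]
    calc (((A ×ˢ B).filter (fun p : ℝ × ℝ => p.1 + x * p.2 = s)).image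
          (Fcell A B t u x)).card
        = ((((A ×ˢ B).filter (fun p : ℝ × ℝ => p.1 + x * p.2 = s)).image
            (fun p => (blk A t p.1, blk B u p.2))).image (fun c => (s, c))).card := by
          rw [heq]
      _ ≤ (((A ×ˢ B).filter (fun p : ℝ × ℝ => p.1 + x * p.2 = s)).image
            (fun p => (blk A t p.1, blk B u p.2))).card := Finset.card_image_le
      _ ≤ 2 * m := support_bound A B (blk A t) (blk B u) m
            (fun r hr => blk_lt A hat hr) (fun r hr => blk_lt B hbu hr)
            (fun r r' h => blk_mono A t h) (fun r r' h => blk_mono B u h) x s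

/-- Sum over all dilation parameters of the pair counts, via cells. -/
lemma sum_Dpairs_le (A B X : Finset ℝ) (m t u : ℕ) (ht : 0 < t) (hu : 0 < u)
    (hat : A.card ≤ m * t) (hbu : B.card ≤ m * u) :
    ∑ x ∈ X, (Dpairs A B x).card
      ≤ 2 * m * (X.card * (A.card * B.card)) + 2 * m * ((A.card * B.card) * (t * u)) := by
  classical
  set P := A ×ˢ B with hP
  set cell : ℝ × ℝ → ℕ × ℕ := fun p => (blk A t p.1, blk B u p.2) with hcell
  set O : ℝ → Finset ((ℝ × ℝ) × (ℝ × ℝ)) := fun x =>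
    (P ×ˢ P).filter (fun pq => (Fcell A B t u x pq.1 = Fcell A B t u x pq.2) ∧ ¬ pq.1 = pq.2)
    with hO
  set W : Finset ((ℝ × ℝ) × (ℝ × ℝ)) :=
    (P ×ˢ P).filter (fun pq => cell pq.1 = cell pq.2) with hW
  have hsplit : ∀ x : ℝ,
      ((P ×ˢ P).filter (fun pq => Fcell A B t u x pq.1 = Fcell A B t u x pq.2)).card
        ≤ A.card * B.card + (O x).card := by
    intro x
    set R := (P ×ˢ P).filter (fun pq => Fcell A B t u x pq.1 = Fcell A B t u x pq.2) with hR
    have hdiag : (R.filter (fun pq => pq.1 = pq.2)).card ≤ A.card * B.card := by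
      have hcard : (R.filter (fun pq => pq.1 = pq.2)).card ≤ P.card := by
        apply Finset.card_le_card_of_injOn (fun pq => pq.1)
        · intro pq hpq
          rw [Finset.mem_coe, Finset.mem_filter, hR, Finset.mem_filter, Finset.mem_product] at hpq
          exact hpq.1.1.1
        · intro pq hpq pq' hpq' h
          rw [Finset.mem_coe, Finset.mem_filter] at hpq hpq'
          have h1 : pq.1 = pq.2 := hpq.2
          have h2 : pq'.1 = pq'.2 := hpq'.2
          simp only at h
          exact Prod.ext h (by rw [← h1, ← h2, h])
      rw [hP, Finset.card_product] at hcard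
      exact hcard
    have hoff : R.filter (fun pq => ¬ pq.1 = pq.2) = O x := by
      rw [hR, hO, Finset.filter_filter]
    have hcards := Finset.card_filter_add_card_filter_not
      (s := R) (p := fun pq : (ℝ × ℝ) × (ℝ × ℝ) => pq.1 = pq.2)
    rw [hoff] at hcards
    omega
  have hOsub : ∀ x : ℝ, O x ⊆ W := by
    intro x pq hpq
    simp only [hO, Finset.mem_filter] at hpq
    rw [hW, Finset.mem_filter]
    refine ⟨hpq.1, ?_⟩
    have h2 := congrArg Prod.snd hpq.2.1
    simpa [Fcell, hcell] using h2
  have hdisj : ∀ x ∈ X, ∀ y ∈ X, x ≠ y → Disjoint (O x) (O y) := by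
    intro x _ y _ hxy
    rw [Finset.disjoint_left]
    intro pq hx hy
    simp only [hO, Finset.mem_filter] at hx hy
    have e1 : pq.1.1 + x * pq.1.2 = pq.2.1 + x * pq.2.2 := congrArg Prod.fst hx.2.1
    have e2 : pq.1.1 + y * pq.1.2 = pq.2.1 + y * pq.2.2 := congrArg Prod.fst hy.2.1
    have hne := hx.2.2
    have h22 : pq.1.2 = pq.2.2 := by
      by_contra hc
      apply hxy
      have hdne : pq.1.2 - pq.2.2 ≠ 0 := sub_ne_zero.2 hc
      have hd : x * (pq.1.2 - pq.2.2) = y * (pq.1.2 - pq.2.2) := by ring_nf; linarith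
      exact mul_right_cancel₀ hdne hd
    have h11 : pq.1.1 = pq.2.1 := by rw [h22] at e1; linarith
    exact hne (Prod.ext h11 h22)
  have hsumO : ∑ x ∈ X, (O x).card ≤ W.card := by
    rw [← Finset.card_biUnion hdisj]
    apply Finset.card_le_card
    intro pq hpq
    rw [Finset.mem_biUnion] at hpq
    obtain ⟨x, _, hx⟩ := hpq
    exact hOsub x hx
  have hWle : W.card ≤ (A.card * B.card) * (t * u) := by
    rw [hW]
    have h := card_pairs_le P cell (t * u) ?fib
    · rw [hP, Finset.card_product] at h; exact h
    case fib =>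
      intro c
      have heq : P.filter (fun p => cell p = c)
          = (A.filter (fun r => blk A t r = c.1)) ×ˢ (B.filter (fun r => blk B u r = c.2)) := by
        rw [hP, ← Finset.filter_product]
        apply Finset.filter_congr
        intro p _
        simp only [hcell, Prod.ext_iff]
      rw [heq, Finset.card_product]
      exact Nat.mul_le_mul (blk_fiber A t ht c.1) (blk_fiber B u hu c.2)
  calc ∑ x ∈ X, (Dpairs A B x).card
      ≤ ∑ x ∈ X, 2 * m * (A.card * B.card + (O x).card) := by
        apply Finset.sum_le_sum
        intro x _
        exact le_trans (Dpairs_le_cell A B x m t u hat hbu)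
          (Nat.mul_le_mul_left _ (hsplit x))
    _ = 2 * m * (X.card * (A.card * B.card)) + 2 * m * (∑ x ∈ X, (O x).card) := by
        rw [← Finset.mul_sum, Finset.sum_add_distrib, Finset.sum_const, smul_eq_mul, Nat.mul_add]
    _ ≤ 2 * m * (X.card * (A.card * B.card)) + 2 * m * ((A.card * B.card) * (t * u)) := by
        have := le_trans hsumO hWle
        exact Nat.add_le_add_left (Nat.mul_le_mul_left _ this) _

end Cells


section FinalAux
open Finset

lemma Dpairs_le_B (A B : Finset ℝ) (x : ℝ) :
    (Dpairs A B x).card ≤ (A.card * B.card) * B.card := by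
  classical
  have h := card_pairs_le (A ×ˢ B) (fun p : ℝ × ℝ => p.1 + x * p.2) B.card
    (fun s => fiber_le_B A B x s)
  rw [Finset.card_product] at h
  exact h

lemma Dpairs_le_A (A B : Finset ℝ) (x : ℝ) (hx : x ≠ 0) :
    (Dpairs A B x).card ≤ (A.card * B.card) * A.card := by
  classical
  have h := card_pairs_le (A ×ˢ B) (fun p : ℝ × ℝ => p.1 + x * p.2) A.card
    (fun s => fiber_le_A A B x s hx)
  rw [Finset.card_product] at h
  exact h

lemma le_mul_ceil (a m : ℕ) (hm : 0 < m) : a ≤ m * ((a + m - 1) / m) := by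
  have h1 := Nat.div_add_mod (a + m - 1) m
  have h2 := Nat.mod_lt (a + m - 1) hm
  generalize hQ : m * ((a + m - 1) / m) = Q at h1 ⊢
  generalize hR : (a + m - 1) % m = R at h1 h2
  omega

lemma mul_ceil_le (a m : ℕ) (hma : m ≤ a) (hm : 0 < m) :
    m * ((a + m - 1) / m) ≤ 2 * a := by
  have h1 : ((a + m - 1) / m) * m ≤ a + m - 1 := Nat.div_mul_le_self _ _
  have h2 : m * ((a + m - 1) / m) = ((a + m - 1) / m) * m := Nat.mul_comm _ _
  generalize hQ : m * ((a + m - 1) / m) = Q at h2 ⊢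
  omega

lemma lt_mul_div_succ (n k : ℕ) (hk : 0 < k) : n < k * (n / k + 1) := by
  have h1 := Nat.div_add_mod n k
  have h2 := Nat.mod_lt n hk
  rw [Nat.mul_add, Nat.mul_one]
  generalize hQ : k * (n / k) = Q at h1 ⊢
  generalize hR : n % k = R at h1 h2
  omega

lemma rpow_32 (n : ℕ) : ((n : ℝ)) ^ ((3:ℝ)/2) = (n : ℝ) * Real.sqrt n := by
  rcases Nat.eq_zero_or_pos n with h | h
  · rw [h]
    simp only [Nat.cast_zero]
    rw [Real.zero_rpow (by norm_num), Real.sqrt_zero, mul_zero]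
  · have hn : (0:ℝ) < n := by exact_mod_cast h
    rw [show ((3:ℝ)/2) = 1 + 1/2 by norm_num, Real.rpow_add hn, Real.rpow_one,
      ← Real.sqrt_eq_rpow]

lemma rpow_12 (n : ℕ) : ((n : ℝ)) ^ ((1:ℝ)/2) = Real.sqrt n :=
  (Real.sqrt_eq_rpow _).symm

end FinalAux


/-- Energy bound: `Σ_{x ∈ X} E⁺(A, x·B) ≤ C·|A|^{3/2}·|B|^{3/2}·|X|^{1/2}`. -/
theorem energy_bound :
    ∃ C : ℝ, 0 < C ∧
      ∀ A B X : Finset ℝ, X.card ≤ A.card * B.card →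
        (∑ x ∈ X, (addEnergy (A : Set ℝ) ((fun b => x * b) '' (B : Set ℝ)) : ℝ)) ≤
          C * (A.card : ℝ) ^ ((3 : ℝ) / 2) * (B.card : ℝ) ^ ((3 : ℝ) / 2) *
            (X.card : ℝ) ^ ((1 : ℝ) / 2) := by

  classical
  refine ⟨42, by norm_num, ?_⟩
  intro A B X hX
  have hcast : (∑ x ∈ X, (addEnergy (A : Set ℝ) ((fun b => x * b) '' (B : Set ℝ)) : ℝ))
      = ((∑ x ∈ X, addEnergy (A : Set ℝ) ((fun b => x * b) '' (B : Set ℝ)) : ℕ) : ℝ) :=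
    (Nat.cast_sum _ _).symm
  rw [hcast]
  have hRHS : (42:ℝ) * (A.card : ℝ) ^ ((3:ℝ)/2) * (B.card : ℝ) ^ ((3:ℝ)/2)
        * (X.card : ℝ) ^ ((1:ℝ)/2)
      = 42 * (((A.card : ℝ) * B.card) * Real.sqrt ((A.card : ℝ) * B.card)
          * Real.sqrt (X.card : ℝ)) := by
    rw [rpow_32, rpow_32, rpow_12, Real.sqrt_mul (by positivity)]
    ring
  rw [hRHS]
  have hab_nonneg : (0:ℝ) ≤ (A.card : ℝ) * B.card := by positivity
  by_cases hbr : X.card * (min A.card B.card)^2 ≤ A.card * B.card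
  · -- trivial branch
    have hnat : (∑ x ∈ X, addEnergy (A : Set ℝ) ((fun b => x * b) '' (B : Set ℝ)))
        ≤ X.card * (A.card * B.card * min A.card B.card) := by
      have h := Finset.sum_le_card_nsmul X
        (fun x => addEnergy (A : Set ℝ) ((fun b => x * b) '' (B : Set ℝ)))
        (A.card * B.card * min A.card B.card) ?bound
      · simpa using h
      case bound =>
        intro x _
        rcases le_total A.card B.card with hab | hab
        · rw [min_eq_left hab]
          by_cases hx0 : x = 0
          · subst hx0
            refine le_trans (energy_at_zero A B) ?_
            rcases Nat.eq_zero_or_pos A.card with h0 | h0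
            · rw [h0]; exact Nat.zero_le _
            · calc A.card = 1 * 1 * A.card := by ring
                _ ≤ A.card * B.card * A.card :=
                  Nat.mul_le_mul (Nat.mul_le_mul h0 (le_trans h0 hab)) le_rfl
          · exact le_trans (energy_le_Dpairs A B x) (Dpairs_le_A A B x hx0)
        · rw [min_eq_right hab]
          exact le_trans (energy_le_Dpairs A B x) (Dpairs_le_B A B x)
    calc ((∑ x ∈ X, addEnergy (A : Set ℝ) ((fun b => x * b) '' (B : Set ℝ)) : ℕ) : ℝ)
        ≤ ((X.card * (A.card * B.card * min A.card B.card) : ℕ) : ℝ) := by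
          exact_mod_cast hnat
      _ = (X.card : ℝ) * ((A.card : ℝ) * B.card) * (min A.card B.card : ℕ) := by
          push_cast; ring
      _ ≤ 42 * (((A.card : ℝ) * B.card) * Real.sqrt ((A.card : ℝ) * B.card)
          * Real.sqrt (X.card : ℝ)) := by
          have hsk : Real.sqrt (X.card : ℝ) * ((min A.card B.card : ℕ) : ℝ)
              ≤ Real.sqrt ((A.card : ℝ) * B.card) := by
            have h1 : ((X.card * (min A.card B.card)^2 : ℕ) : ℝ)
                ≤ ((A.card * B.card : ℕ) : ℝ) := by exact_mod_cast hbr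
            have h2 : Real.sqrt ((X.card * (min A.card B.card)^2 : ℕ) : ℝ)
                ≤ Real.sqrt ((A.card * B.card : ℕ) : ℝ) := Real.sqrt_le_sqrt h1
            have h3 : Real.sqrt ((X.card * (min A.card B.card)^2 : ℕ) : ℝ)
                = Real.sqrt (X.card : ℝ) * ((min A.card B.card : ℕ) : ℝ) := by
              push_cast
              rw [Real.sqrt_mul (by positivity), Real.sqrt_sq (by positivity)]
            rw [h3] at h2
            have h4 : (((A.card * B.card : ℕ)) : ℝ) = (A.card : ℝ) * B.card := by push_cast; ring
            rw [h4] at h2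
            exact h2
          have hXk : (X.card : ℝ) = Real.sqrt (X.card : ℝ) * Real.sqrt (X.card : ℝ) :=
            (Real.mul_self_sqrt (by positivity)).symm
          have hterm : (X.card : ℝ) * ((A.card : ℝ) * B.card) * (min A.card B.card : ℕ)
              ≤ ((A.card : ℝ) * B.card) * Real.sqrt ((A.card : ℝ) * B.card)
                * Real.sqrt (X.card : ℝ) := by
            have h5 : (X.card : ℝ) * ((A.card : ℝ) * B.card) * (min A.card B.card : ℕ)
                = ((A.card : ℝ) * B.card) * Real.sqrt (X.card : ℝ)
                  * (Real.sqrt (X.card : ℝ) * (min A.card B.card : ℕ)) := by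
              conv_lhs => rw [hXk]
              ring
            rw [h5]
            calc ((A.card : ℝ) * B.card) * Real.sqrt (X.card : ℝ)
                  * (Real.sqrt (X.card : ℝ) * (min A.card B.card : ℕ))
                ≤ ((A.card : ℝ) * B.card) * Real.sqrt (X.card : ℝ)
                  * Real.sqrt ((A.card : ℝ) * B.card) := by
                  apply mul_le_mul_of_nonneg_left hsk
                  exact mul_nonneg (mul_nonneg (Nat.cast_nonneg _) (Nat.cast_nonneg _)) (Real.sqrt_nonneg _)
              _ = ((A.card : ℝ) * B.card) * Real.sqrt ((A.card : ℝ) * B.card)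
                  * Real.sqrt (X.card : ℝ) := by ring
          have hpos : (0:ℝ) ≤ ((A.card : ℝ) * B.card) * Real.sqrt ((A.card : ℝ) * B.card)
              * Real.sqrt (X.card : ℝ) :=
              mul_nonneg (mul_nonneg (mul_nonneg (Nat.cast_nonneg _) (Nat.cast_nonneg _)) (Real.sqrt_nonneg _)) (Real.sqrt_nonneg _)
          linarith
  · -- main branch: cell decomposition
    push_neg at hbr
    set mn := min A.card B.card with hmn
    have hmn1 : 0 < mn := by
      rcases Nat.eq_zero_or_pos mn with h | h
      · rw [h] at hbr; simp at hbr
      · exact h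
    have hk1 : 0 < X.card := by
      rcases Nat.eq_zero_or_pos X.card with h | h
      · rw [h] at hbr; simp at hbr
      · exact h
    have ha1 : 0 < A.card := lt_of_lt_of_le hmn1 (min_le_left _ _)
    have hb1 : 0 < B.card := lt_of_lt_of_le hmn1 (min_le_right _ _)
    set d := Nat.sqrt ((A.card * B.card) / X.card) with hd
    set m := d + 1 with hm
    have hm0 : 0 < m := Nat.succ_pos _
    have hdivlt : (A.card * B.card) / X.card < mn^2 := by
      apply Nat.lt_of_mul_lt_mul_left (a := X.card)
      calc X.card * ((A.card * B.card) / X.card)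
          = ((A.card * B.card) / X.card) * X.card := Nat.mul_comm _ _
        _ ≤ A.card * B.card := Nat.div_mul_le_self _ _
        _ < X.card * mn^2 := hbr
    have hmmn : m ≤ mn := by
      rw [hm]
      exact Nat.succ_le_of_lt (Nat.sqrt_lt'.2 hdivlt)
    have hma : m ≤ A.card := le_trans hmmn (min_le_left _ _)
    have hmb : m ≤ B.card := le_trans hmmn (min_le_right _ _)
    set t := (A.card + m - 1) / m with htdef
    set u := (B.card + m - 1) / m with hudef
    have ht : 0 < t := by
      rw [htdef]
      rw [Nat.lt_iff_add_one_le, Nat.zero_add, Nat.one_le_div_iff hm0]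
      omega
    have hu : 0 < u := by
      rw [hudef]
      rw [Nat.lt_iff_add_one_le, Nat.zero_add, Nat.one_le_div_iff hm0]
      omega
    have hat : A.card ≤ m * t := le_mul_ceil A.card m hm0
    have hbu : B.card ≤ m * u := le_mul_ceil B.card m hm0
    have hmt2a : m * t ≤ 2 * A.card := mul_ceil_le A.card m hma hm0
    have hmu2b : m * u ≤ 2 * B.card := mul_ceil_le B.card m hmb hm0
    -- a*b < k*m^2
    have habkm : A.card * B.card < X.card * m^2 := by
      have h1 : A.card * B.card < X.card * ((A.card * B.card) / X.card + 1) :=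
        lt_mul_div_succ _ _ hk1
      have h2 : (A.card * B.card) / X.card + 1 ≤ m^2 := by
        have hlt2 := Nat.lt_succ_sqrt' ((A.card * B.card) / X.card)
        rw [Nat.succ_eq_add_one] at hlt2
        rw [hm, hd]
        omega
      exact lt_of_lt_of_le h1 (Nat.mul_le_mul_left _ h2)
    have htu : t * u ≤ 4 * X.card := by
      have h4 : m^2 * (t * u) ≤ 4 * (A.card * B.card) := by
        calc m^2 * (t * u) = (m * t) * (m * u) := by ring
          _ ≤ (2 * A.card) * (2 * B.card) := Nat.mul_le_mul hmt2a hmu2b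
          _ = 4 * (A.card * B.card) := by ring
      have h6 : m^2 * (t * u) ≤ m^2 * (4 * X.card) := by
        calc m^2 * (t * u) ≤ 4 * (A.card * B.card) := h4
          _ ≤ 4 * (X.card * m^2) := Nat.mul_le_mul_left _ (le_of_lt habkm)
          _ = m^2 * (4 * X.card) := by ring
      exact Nat.le_of_mul_le_mul_left (by
        calc m^2 * (t * u) ≤ m^2 * (4 * X.card) := h6) (by positivity)
    have hnat : (∑ x ∈ X, addEnergy (A : Set ℝ) ((fun b => x * b) '' (B : Set ℝ)))
        ≤ 10 * (X.card * (A.card * B.card) * m) := by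
      calc (∑ x ∈ X, addEnergy (A : Set ℝ) ((fun b => x * b) '' (B : Set ℝ)))
          ≤ ∑ x ∈ X, (Dpairs A B x).card :=
            Finset.sum_le_sum (fun x _ => energy_le_Dpairs A B x)
        _ ≤ 2 * m * (X.card * (A.card * B.card))
              + 2 * m * ((A.card * B.card) * (t * u)) :=
            sum_Dpairs_le A B X m t u ht hu hat hbu
        _ ≤ 2 * m * (X.card * (A.card * B.card))
              + 2 * m * ((A.card * B.card) * (4 * X.card)) := by
            apply Nat.add_le_add_left
            exact Nat.mul_le_mul_left _ (Nat.mul_le_mul_left _ htu)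
        _ = 10 * (X.card * (A.card * B.card) * m) := by ring
    -- now the real estimate
    have hdreal : (d : ℝ) ≤ Real.sqrt (((A.card : ℝ) * B.card) / X.card) := by
      rw [Real.le_sqrt (by positivity) (by positivity)]
      calc ((d : ℝ))^2 = ((d^2 : ℕ) : ℝ) := by push_cast; ring
        _ ≤ (((A.card * B.card) / X.card : ℕ) : ℝ) := by
            exact_mod_cast Nat.sqrt_le' ((A.card * B.card) / X.card)
        _ ≤ ((A.card * B.card : ℕ) : ℝ) / (X.card : ℝ) := Nat.cast_div_le
        _ = ((A.card : ℝ) * B.card) / X.card := by push_cast; ring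
    have hksqrt : (X.card : ℝ) * Real.sqrt (((A.card : ℝ) * B.card) / X.card)
        = Real.sqrt (X.card : ℝ) * Real.sqrt ((A.card : ℝ) * B.card) := by
      rw [Real.sqrt_div hab_nonneg]
      rw [eq_comm]
      calc Real.sqrt (X.card : ℝ) * Real.sqrt ((A.card : ℝ) * B.card)
          = ((X.card : ℝ) / Real.sqrt (X.card : ℝ)) * Real.sqrt ((A.card : ℝ) * B.card) := by
            rw [Real.div_sqrt]
        _ = (X.card : ℝ) * (Real.sqrt ((A.card : ℝ) * B.card) / Real.sqrt (X.card : ℝ)) := by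
            ring
    have hkle : (X.card : ℝ) ≤ Real.sqrt (X.card : ℝ) * Real.sqrt ((A.card : ℝ) * B.card) := by
      have h1 : Real.sqrt (X.card : ℝ) ≤ Real.sqrt ((A.card : ℝ) * B.card) := by
        apply Real.sqrt_le_sqrt
        exact_mod_cast hX
      calc (X.card : ℝ) = Real.sqrt (X.card : ℝ) * Real.sqrt (X.card : ℝ) :=
            (Real.mul_self_sqrt (by positivity)).symm
        _ ≤ Real.sqrt (X.card : ℝ) * Real.sqrt ((A.card : ℝ) * B.card) :=
            mul_le_mul_of_nonneg_left h1 (Real.sqrt_nonneg _)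
    have hkm : (X.card : ℝ) * m ≤ 2 * (Real.sqrt (X.card : ℝ)
        * Real.sqrt ((A.card : ℝ) * B.card)) := by
      have hmle : (m : ℝ) ≤ Real.sqrt (((A.card : ℝ) * B.card) / X.card) + 1 := by
        rw [hm]
        push_cast
        linarith [hdreal]
      calc (X.card : ℝ) * m
          ≤ (X.card : ℝ) * (Real.sqrt (((A.card : ℝ) * B.card) / X.card) + 1) := by
            apply mul_le_mul_of_nonneg_left hmle (by positivity)
        _ = (X.card : ℝ) * Real.sqrt (((A.card : ℝ) * B.card) / X.card) + X.card := by ring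
        _ ≤ Real.sqrt (X.card : ℝ) * Real.sqrt ((A.card : ℝ) * B.card)
              + Real.sqrt (X.card : ℝ) * Real.sqrt ((A.card : ℝ) * B.card) := by
            rw [hksqrt]
            linarith [hkle]
        _ = 2 * (Real.sqrt (X.card : ℝ) * Real.sqrt ((A.card : ℝ) * B.card)) := by ring
    calc ((∑ x ∈ X, addEnergy (A : Set ℝ) ((fun b => x * b) '' (B : Set ℝ)) : ℕ) : ℝ)
        ≤ ((10 * (X.card * (A.card * B.card) * m) : ℕ) : ℝ) := by exact_mod_cast hnat
      _ = 10 * (((A.card : ℝ) * B.card) * ((X.card : ℝ) * m)) := by push_cast; ring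
      _ ≤ 10 * (((A.card : ℝ) * B.card) * (2 * (Real.sqrt (X.card : ℝ)
            * Real.sqrt ((A.card : ℝ) * B.card)))) := by
          apply mul_le_mul_of_nonneg_left _ (by norm_num)
          exact mul_le_mul_of_nonneg_left hkm hab_nonneg
      _ = 20 * (((A.card : ℝ) * B.card) * Real.sqrt ((A.card : ℝ) * B.card)
            * Real.sqrt (X.card : ℝ)) := by ring
      _ ≤ 42 * (((A.card : ℝ) * B.card) * Real.sqrt ((A.card : ℝ) * B.card)
            * Real.sqrt (X.card : ℝ)) := by
          have : (0:ℝ) ≤ ((A.card : ℝ) * B.card) * Real.sqrt ((A.card : ℝ) * B.card)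
              * Real.sqrt (X.card : ℝ) := by positivity
          linarith
end
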